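/- arXiv:1011.1329 — 6 statements merged into one kernel-verified Lean document; each statement's English description precedes it below -/
import Mathlib

section
/- Let θ ~ Exp(α) be independent of a standard Brownian motion w, κ = a - σ²/2 with β = 2a/σ² - 1 > 0, and M = exp(-σ w_θ - κ θ). Then E[M^β log M] = β σ² / (2α). -/
open MeasureTheory ProbabilityTheory Real Set Filter Topology

/-!
Write `X = log M = -σ √θ N - κ θ`, where `N` is standard normal and independent of `θ`.
Conditionally on `θ = t`, `X` is Gaussian with mean `-κ t` and variance `σ² t`, so
`E[exp (q X)] = E[exp ((q²σ²/2 - q κ) θ)] = α / (α - (q²σ²/2 - q κ))` whenever the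
exponent is below `α`. This holds on a neighbourhood of `q = β`, because `κ = β σ²/2` makes
the exponent vanish there. Hence `E[M^β log M] = E[X exp (β X)]` is the derivative at `β`
of this explicit moment generating function.
-/

lemma expMeasure_eq_withDensity (r : ℝ) :
    expMeasure r =
      (volume.restrict (Ioi 0)).withDensity fun x ↦ ENNReal.ofReal (r * exp (-(r * x))) := by
  have hpdf :
      exponentialPDF r = (Ici 0).indicator fun x ↦ ENNReal.ofReal (r * exp (-(r * x))) := by
    ext x
    by_cases hx : 0 ≤ x <;> simp [exponentialPDF_eq, hx]
  change volume.withDensity (exponentialPDF r) = _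
  rw [hpdf, withDensity_indicator measurableSet_Ici, Measure.restrict_congr_set Ioi_ae_eq_Ici]

lemma integral_expMeasure {r : ℝ} (hr : 0 ≤ r) (f : ℝ → ℝ) :
    ∫ x, f x ∂expMeasure r = ∫ x in Ioi 0, r * exp (-(r * x)) * f x := by
  rw [expMeasure_eq_withDensity, integral_withDensity_eq_integral_toReal_smul (by fun_prop)
    (ae_of_all _ fun _ ↦ ENNReal.ofReal_lt_top)]
  simp_rw [ENNReal.toReal_ofReal (by positivity : 0 ≤ r * exp _), smul_eq_mul]

lemma integrable_expMeasure_iff {r : ℝ} (hr : 0 ≤ r) (f : ℝ → ℝ) :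
    Integrable f (expMeasure r) ↔ IntegrableOn (fun x ↦ r * exp (-(r * x)) * f x) (Ioi 0) := by
  rw [expMeasure_eq_withDensity, integrable_withDensity_iff_integrable_smul' (by fun_prop)
    (ae_of_all _ fun _ ↦ ENNReal.ofReal_lt_top)]
  simp_rw [ENNReal.toReal_ofReal (by positivity : 0 ≤ r * exp _), smul_eq_mul]
  rfl

lemma mul_exp_neg_mul_mul_exp_mul (r t x : ℝ) :
    r * exp (-(r * x)) * exp (t * x) = r * exp ((t - r) * x) := by
  rw [mul_assoc, ← exp_add]; ring_nf

lemma integrable_exp_mul_expMeasure {r t : ℝ} (hr : 0 ≤ r) (ht : t < r) :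
    Integrable (fun x ↦ exp (t * x)) (expMeasure r) := by
  rw [integrable_expMeasure_iff hr]
  simp_rw [mul_exp_neg_mul_mul_exp_mul]
  exact (integrableOn_exp_mul_Ioi (by linarith) 0).const_mul r

lemma integral_exp_mul_expMeasure {r t : ℝ} (hr : 0 ≤ r) (ht : t < r) :
    ∫ x, exp (t * x) ∂expMeasure r = r / (r - t) := by
  rw [integral_expMeasure hr]
  simp_rw [mul_exp_neg_mul_mul_exp_mul]
  rw [integral_const_mul, integral_exp_mul_Ioi (by linarith), mul_zero, exp_zero,
    ← neg_sub r t, div_neg, neg_div, neg_neg, mul_one_div]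

lemma integral_exp_mul_sqrt_gaussianReal {t : ℝ} (ht : 0 ≤ t) (c d : ℝ) :
    ∫ n, exp (c * √t * n + d * t) ∂gaussianReal 0 1 = exp ((d + c ^ 2 / 2) * t) := by
  have hmgf := congrFun (mgf_fun_id_gaussianReal (μ := 0) (v := 1)) (c * √t)
  simp only [mgf, NNReal.coe_one, zero_mul, one_mul, zero_add] at hmgf
  simp_rw [exp_add, integral_mul_const, hmgf, ← exp_add, mul_pow, sq_sqrt ht]
  ring_nf

section GaussianMixture

variable {ν : Measure ℝ} {c d : ℝ}

lemma integrable_exp_mul_sqrt_prod_gaussianReal (hν : ∀ᵐ t ∂ν, 0 ≤ t)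
    (hint : Integrable (fun t ↦ exp ((d + c ^ 2 / 2) * t)) ν) :
    Integrable (fun p : ℝ × ℝ ↦ exp (c * √p.1 * p.2 + d * p.1))
      (ν.prod (gaussianReal 0 1)) := by
  refine (integrable_prod_iff (by fun_prop)).2 ⟨ae_of_all _ fun t ↦ ?_, ?_⟩
  · simp_rw [exp_add, mul_comm _ (exp (d * t))]
    exact (integrable_exp_mul_gaussianReal _).const_mul _
  · refine hint.congr ?_
    filter_upwards [hν] with t ht
    simp_rw [norm_of_nonneg (exp_pos _).le, integral_exp_mul_sqrt_gaussianReal ht]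

lemma integral_exp_mul_sqrt_prod_gaussianReal [SFinite ν] (hν : ∀ᵐ t ∂ν, 0 ≤ t)
    (hint : Integrable (fun t ↦ exp ((d + c ^ 2 / 2) * t)) ν) :
    ∫ p, exp (c * √p.1 * p.2 + d * p.1) ∂(ν.prod (gaussianReal 0 1))
      = ∫ t, exp ((d + c ^ 2 / 2) * t) ∂ν := by
  rw [integral_prod _ (integrable_exp_mul_sqrt_prod_gaussianReal hν hint)]
  exact integral_congr_ae (hν.mono fun t ht ↦ integral_exp_mul_sqrt_gaussianReal ht c d)

end GaussianMixture

instance (r : ℝ) : SFinite (expMeasure r) := by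
  rw [expMeasure_eq_withDensity]; infer_instance

lemma expMeasure_ae_nonneg (r : ℝ) : ∀ᵐ t ∂expMeasure r, 0 ≤ t := by
  rw [expMeasure_eq_withDensity]
  exact (withDensity_absolutelyContinuous _ _).ae_le
    (ae_restrict_of_forall_mem measurableSet_Ioi fun _ ht ↦ le_of_lt ht)

section ExponentialTimeGaussian

variable {Ω : Type*} [MeasurableSpace Ω] {μ : Measure Ω} [IsFiniteMeasure μ]
  {θ N : Ω → ℝ} {α c d q : ℝ}

lemma map_pair_eq_expMeasure_prod_gaussianReal (hθ : Measurable θ) (hN : Measurable N)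
    (hθlaw : μ.map θ = expMeasure α) (hNlaw : μ.map N = gaussianReal 0 1)
    (hindep : IndepFun θ N μ) :
    μ.map (fun ω ↦ (θ ω, N ω)) = (expMeasure α).prod (gaussianReal 0 1) := by
  rw [← hθlaw, ← hNlaw]
  exact (indepFun_iff_map_prod_eq_prod_map_map hθ.aemeasurable hN.aemeasurable).1 hindep

lemma integrable_exp_mul_sqrt_mul_add_of_expMeasure (hθ : Measurable θ) (hN : Measurable N)
    (hα : 0 ≤ α) (hθlaw : μ.map θ = expMeasure α) (hNlaw : μ.map N = gaussianReal 0 1)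
    (hindep : IndepFun θ N μ) (hq : q * d + (q * c) ^ 2 / 2 < α) :
    Integrable (fun ω ↦ exp (q * (c * √(θ ω) * N ω + d * θ ω))) μ := by
  have hint := integrable_exp_mul_sqrt_prod_gaussianReal (c := q * c) (d := q * d)
    (expMeasure_ae_nonneg α) (integrable_exp_mul_expMeasure hα hq)
  rw [← map_pair_eq_expMeasure_prod_gaussianReal hθ hN hθlaw hNlaw hindep,
    integrable_map_measure (by fun_prop) (hθ.prodMk hN).aemeasurable] at hint
  refine hint.congr (ae_of_all _ fun ω ↦ ?_)
  simp only [Function.comp_apply]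
  ring_nf

lemma mgf_sqrt_mul_add_of_expMeasure (hθ : Measurable θ) (hN : Measurable N)
    (hα : 0 ≤ α) (hθlaw : μ.map θ = expMeasure α) (hNlaw : μ.map N = gaussianReal 0 1)
    (hindep : IndepFun θ N μ) (hq : q * d + (q * c) ^ 2 / 2 < α) :
    mgf (fun ω ↦ c * √(θ ω) * N ω + d * θ ω) μ q =
      α / (α - (q * d + (q * c) ^ 2 / 2)) := by
  have h := integral_exp_mul_sqrt_prod_gaussianReal (c := q * c) (d := q * d)
    (expMeasure_ae_nonneg α) (integrable_exp_mul_expMeasure hα hq)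
  rw [integral_exp_mul_expMeasure hα hq,
    ← map_pair_eq_expMeasure_prod_gaussianReal hθ hN hθlaw hNlaw hindep,
    integral_map (hθ.prodMk hN).aemeasurable (by fun_prop)] at h
  rw [mgf, ← h]
  congr with ω
  ring_nf

end ExponentialTimeGaussian

lemma hasDerivAt_div_sub_quadratic {α c d q : ℝ} (hq : q * d + (q * c) ^ 2 / 2 ≠ α) :
    HasDerivAt (fun q ↦ α / (α - (q * d + (q * c) ^ 2 / 2)))
      (α * (d + q * c ^ 2) / (α - (q * d + (q * c) ^ 2 / 2)) ^ 2) q := by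
  have hL : HasDerivAt (fun q ↦ q * d + (q * c) ^ 2 / 2) (d + q * c ^ 2) q :=
    ((hasDerivAt_mul_const d).fun_add
      (((hasDerivAt_mul_const c).fun_pow 2).div_const 2)).congr_deriv (by push_cast; ring)
  exact ((hasDerivAt_const q α).fun_div (hL.const_sub α) (sub_ne_zero.2 hq.symm)).congr_deriv
    (by ring)

theorem stmt_4_general {Ω : Type*} [MeasurableSpace Ω] (μ : Measure Ω) [IsProbabilityMeasure μ]
    (θ N : Ω → ℝ) (hθmeas : Measurable θ) (hNmeas : Measurable N)
    {α : ℝ} (hα : 0 < α) (hθlaw : Measure.map θ μ = expMeasure α)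
    (hNlaw : Measure.map N μ = gaussianReal 0 1)
    (hindep : IndepFun θ N μ)
    {σ κ β : ℝ} (hσ : 0 < σ)
    (hβdef : β = 2 * (κ + σ ^ 2 / 2) / σ ^ 2 - 1)
    (M : Ω → ℝ)
    (hM : ∀ ω, M ω = Real.exp (-σ * Real.sqrt (θ ω) * N ω - κ * θ ω)) :
    ∫ ω, M ω ^ β * Real.log (M ω) ∂μ = β * σ ^ 2 / (2 * α) := by
  have hκ : κ = β * σ ^ 2 / 2 := by
    field_simp at hβdef
    linarith
  set X : Ω → ℝ := fun ω ↦ -σ * √(θ ω) * N ω + -κ * θ ω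
  set U : Set ℝ := {q | q * -κ + (q * -σ) ^ 2 / 2 < α}
  have hU : IsOpen U := isOpen_lt (by fun_prop) continuous_const
  have hβU : β ∈ U :=
    calc β * -κ + (β * -σ) ^ 2 / 2 = 0 := by rw [hκ]; ring
      _ < α := hα
  have hβint : β ∈ interior (integrableExpSet X μ) :=
    interior_mono (fun q hq ↦ integrable_exp_mul_sqrt_mul_add_of_expMeasure hθmeas hNmeas hα.le
      hθlaw hNlaw hindep hq) (hU.interior_eq ▸ hβU)
  have hmgf : mgf X μ =ᶠ[𝓝 β] fun q ↦ α / (α - (q * -κ + (q * -σ) ^ 2 / 2)) :=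
    eventually_of_mem (hU.mem_nhds hβU) fun q hq ↦
      mgf_sqrt_mul_add_of_expMeasure hθmeas hNmeas hα.le hθlaw hNlaw hindep hq
  calc ∫ ω, M ω ^ β * log (M ω) ∂μ = μ[fun ω ↦ X ω * exp (β * X ω)] := by
        refine integral_congr_ae (ae_of_all _ fun ω ↦ ?_)
        simp only [hM, X, rpow_def_of_pos (exp_pos _), log_exp]
        ring_nf
    _ = deriv (fun q ↦ α / (α - (q * -κ + (q * -σ) ^ 2 / 2))) β := by
        rw [← deriv_mgf hβint, hmgf.deriv_eq]
    _ = β * σ ^ 2 / (2 * α) := by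
        rw [(hasDerivAt_div_sub_quadratic (ne_of_lt hβU)).deriv, hκ]
        field_simp
        ring

/-- Let `θ ~ Exp(α)` be independent of a standard Brownian motion `w`, and
`M = exp(-σ w_θ - κ θ)`.  Conditionally on `θ`, `w_θ` is `N(0, θ)`, so we represent
`w_θ = √θ · N` with `N` standard normal independent of `θ`.  With `κ = a - σ²/2`,
`β = 2(κ + σ²/2)/σ² - 1 > 0`, one has
`E[M^β log M] = β σ² / (2α)`. -/
theorem stmt_4 {Ω : Type*} [MeasurableSpace Ω] (μ : Measure Ω) [IsProbabilityMeasure μ]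
    (θ N : Ω → ℝ) (hθmeas : Measurable θ) (hNmeas : Measurable N)
    {α : ℝ} (hα : 0 < α) (hθlaw : Measure.map θ μ = expMeasure α)
    (hNlaw : Measure.map N μ = gaussianReal 0 1)
    (hindep : IndepFun θ N μ)
    {σ κ β : ℝ} (hσ : 0 < σ)
    (hβdef : β = 2 * (κ + σ ^ 2 / 2) / σ ^ 2 - 1) (hβ : 0 < β)
    (M : Ω → ℝ)
    (hM : ∀ ω, M ω = Real.exp (-σ * Real.sqrt (θ ω) * N ω - κ * θ ω)) :
    ∫ ω, M ω ^ β * Real.log (M ω) ∂μ = β * σ ^ 2 / (2 * α) :=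
  stmt_4_general μ θ N hθmeas hNmeas hα hθlaw hNlaw hindep hσ hβdef M hM
end

section
/- Let θ ~ Exp(α) be independent of a standard Brownian motion w, κ = a - σ²/2 with a, σ > 0, β = 2a/σ² - 1 > 0, and M = exp(-σ w_θ - κ θ). Then E[M^β (log M)₊] ≤ (β σ² + κ) E[θ] + σ √(2/π) E[√θ] < ∞. -/
/-!
Since `κθ ≥ 0`, `(log M)₊ ≤ σ√θ|N| + κθ`, and because `βκ = β²σ²/2` the other factor is
`M^β = exp(cN - c²/2)` with `c = -βσ√θ`. Given `θ = t`, this exponential tilt turns the standard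
Gaussian law of `N` into `N(c, 1)` (Cameron–Martin), so the conditional expectation is at most
`E[σ√t|N + c|] + κt ≤ σ√t (√(2/π) + |c|) + κt = σ√(2/π)√t + (βσ² + κ)t`, using `E|N| = √(2/π)`.
Integrating over `θ ~ Exp(α)`, whose moments `E[θ]` and `E[√θ]` are finite, gives the bound.
-/

open MeasureTheory ProbabilityTheory Real

lemma integral_Ioi_mul_exp_neg_sq_div_two :
    ∫ x in Set.Ioi (0 : ℝ), x * exp (-x ^ 2 / 2) = 1 := by
  have h := integral_rpow_mul_exp_neg_mul_rpow (p := 2) (q := 1) (b := 1 / 2)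
    two_pos (by norm_num) (by norm_num)
  norm_num [Gamma_one] at h
  convert h using 5
  ring

lemma integral_abs_gaussianReal : ∫ x, |x| ∂gaussianReal 0 1 = √(2 / π) := by
  rw [integral_gaussianReal_eq_integral_smul one_ne_zero]
  have h := integral_comp_abs (f := fun u => gaussianPDFReal 0 1 u * u)
  simp only [gaussianPDFReal, sub_zero, sq_abs, NNReal.coe_one, mul_one, smul_eq_mul] at h ⊢
  simp_rw [h, mul_assoc, integral_const_mul, mul_comm (rexp _),
    integral_Ioi_mul_exp_neg_sq_div_two]
  rw [sqrt_div zero_le_two, sqrt_mul zero_le_two]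
  have : √2 * √2 = 2 := mul_self_sqrt zero_le_two
  field_simp
  linarith

lemma withDensity_exp_gaussianReal (c : ℝ) :
    (gaussianReal 0 1).withDensity (fun x => ENNReal.ofReal (exp (c * x - c ^ 2 / 2)))
      = gaussianReal c 1 := by
  rw [gaussianReal_of_var_ne_zero _ one_ne_zero, gaussianReal_of_var_ne_zero _ one_ne_zero,
    ← withDensity_mul _ (measurable_gaussianPDF 0 1) (by fun_prop)]
  congr 1
  ext x
  rw [Pi.mul_apply, gaussianPDF, gaussianPDF, ← ENNReal.ofReal_mul (gaussianPDFReal_nonneg _ _ _)]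
  simp only [gaussianPDFReal, NNReal.coe_one, mul_one, mul_assoc, ← exp_add]
  congr 3
  ring

lemma lintegral_exp_mul_gaussianReal (c : ℝ) (f : ℝ → ENNReal) :
    ∫⁻ x, ENNReal.ofReal (exp (c * x - c ^ 2 / 2)) * f x ∂gaussianReal 0 1
      = ∫⁻ x, f (x + c) ∂gaussianReal 0 1 := by
  refine (lintegral_withDensity_eq_lintegral_mul_non_measurable _ (by fun_prop)
    (ae_of_all _ fun _ => ENNReal.ofReal_lt_top) f).symm.trans ?_
  rw [withDensity_exp_gaussianReal, ← zero_add c, ← gaussianReal_map_add_const, zero_add]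
  exact lintegral_map_equiv f (MeasurableEquiv.addRight c)

lemma lintegral_exp_mul_gaussianReal_le {a b c : ℝ} (ha : 0 ≤ a) (hb : 0 ≤ b) :
    ∫⁻ x, ENNReal.ofReal (exp (c * x - c ^ 2 / 2) * (a * |x| + b)) ∂gaussianReal 0 1
      ≤ ENNReal.ofReal (a * √(2 / π) + (a * |c| + b)) := by
  have habs : Integrable (fun x => |x|) (gaussianReal 0 1) :=
    (memLp_one_iff_integrable.mp (memLp_id_gaussianReal 1)).abs
  simp_rw [ENNReal.ofReal_mul (exp_pos _).le]
  rw [lintegral_exp_mul_gaussianReal]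
  calc _ ≤ ∫⁻ x, ENNReal.ofReal (a * |x| + (a * |c| + b)) ∂gaussianReal 0 1 := by
        refine lintegral_mono fun x => ENNReal.ofReal_le_ofReal ?_
        nlinarith [abs_add_le x c]
    _ = ENNReal.ofReal (∫ x, (a * |x| + (a * |c| + b)) ∂gaussianReal 0 1) :=
        (ofReal_integral_eq_lintegral_ofReal ((habs.const_mul a).add (integrable_const _))
          (ae_of_all _ fun x => by dsimp; positivity)).symm
    _ = ENNReal.ofReal (a * √(2 / π) + (a * |c| + b)) := by
        rw [integral_add (habs.const_mul a) (integrable_const _), integral_const_mul,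
          integral_abs_gaussianReal, integral_const, probReal_univ, one_smul]

lemma measurable_gammaPDF (a r : ℝ) : Measurable (gammaPDF a r) :=
  (measurable_gammaPDFReal a r).ennreal_ofReal

lemma ae_nonneg_gammaMeasure (a r : ℝ) : ∀ᵐ t ∂gammaMeasure a r, 0 ≤ t := by
  rw [gammaMeasure, ae_withDensity_iff (measurable_gammaPDF a r)]
  refine ae_of_all _ fun t ht => ?_
  by_contra! hneg
  exact ht (gammaPDF_of_neg hneg)

lemma integrable_rpow_gammaMeasure {a r s : ℝ} (ha : 0 < a) (hr : 0 < r) (hs : -a < s) :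
    Integrable (fun t : ℝ => t ^ s) (gammaMeasure a r) := by
  rw [gammaMeasure, integrable_withDensity_iff (measurable_gammaPDF a r)
    (ae_of_all _ fun _ => ENNReal.ofReal_lt_top), ← integrableOn_univ,
    ← Set.Iio_union_Ici (a := 0), integrableOn_union, integrableOn_Ici_iff_integrableOn_Ioi]
  constructor
  · exact integrableOn_zero.congr_fun (fun t (ht : t < 0) => by simp [gammaPDF_of_neg ht])
      measurableSet_Iio
  · refine IntegrableOn.congr_fun ((integrableOn_rpow_mul_exp_neg_mul_rpow (s := s + (a - 1))
      (by linarith) one_pos hr).const_mul (r ^ a / Gamma a)) (fun t (ht : 0 < t) => ?_)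
      measurableSet_Ioi
    have := Gamma_pos_of_pos ha
    rw [gammaPDF_of_nonneg ht.le, ENNReal.toReal_ofReal (by positivity), rpow_add ht, rpow_one,
      neg_mul]
    ring

lemma exp_rpow_mul_max_log_exp_le {σ κ β t x : ℝ} (hσ : 0 ≤ σ) (hκ : 0 ≤ κ)
    (hβ : β * σ ^ 2 = 2 * κ) (ht : 0 ≤ t) :
    exp (-σ * √t * x - κ * t) ^ β * max (log (exp (-σ * √t * x - κ * t))) 0
      ≤ exp (-β * σ * √t * x - (-β * σ * √t) ^ 2 / 2) * (σ * √t * |x| + κ * t) := by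
  have hexp :
      exp (-σ * √t * x - κ * t) ^ β = exp (-β * σ * √t * x - (-β * σ * √t) ^ 2 / 2) := by
    rw [← exp_mul]
    congr 1
    linear_combination (β * t / 2) * hβ + (β ^ 2 * σ ^ 2 / 2) * sq_sqrt ht
  rw [hexp, log_exp]
  refine mul_le_mul_of_nonneg_left (max_le ?_ (by positivity)) (exp_pos _).le
  nlinarith [mul_le_mul_of_nonneg_left (neg_le_abs x) (by positivity : 0 ≤ σ * √t),
    mul_nonneg hκ ht]

/-- Let `θ ~ Exp(α)` be independent of a standard Brownian motion `w`, and
`M = exp(-σ w_θ - κ θ)`.  Conditionally on `θ`, `w_θ` is `N(0, θ)`, so we represent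
`w_θ = √θ · N` with `N` standard normal independent of `θ`.  With `κ = a - σ²/2`,
`β = 2(κ + σ²/2)/σ² - 1 > 0`, one has
`E[M^β (log M)₊] ≤ (β σ² + κ) E[θ] + σ √(2/π) E[√θ] < ∞`. -/
theorem stmt_5 {Ω : Type*} [MeasurableSpace Ω] (μ : Measure Ω) [IsProbabilityMeasure μ]
    (θ N : Ω → ℝ) (hθmeas : Measurable θ) (hNmeas : Measurable N)
    {α : ℝ} (hα : 0 < α) (hθlaw : Measure.map θ μ = expMeasure α)
    (hNlaw : Measure.map N μ = gaussianReal 0 1)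
    (hindep : IndepFun θ N μ)
    {σ κ β : ℝ} (hσ : 0 < σ)
    (hβdef : β = 2 * (κ + σ ^ 2 / 2) / σ ^ 2 - 1) (hβ : 0 < β)
    (M : Ω → ℝ)
    (hM : ∀ ω, M ω = Real.exp (-σ * Real.sqrt (θ ω) * N ω - κ * θ ω)) :
    ∫⁻ ω, ENNReal.ofReal (M ω ^ β * max (Real.log (M ω)) 0) ∂μ ≤
      ENNReal.ofReal ((β * σ ^ 2 + κ) * ∫ ω, θ ω ∂μ
        + σ * Real.sqrt (2 / Real.pi) * ∫ ω, Real.sqrt (θ ω) ∂μ) := by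
  have hκβ : β * σ ^ 2 = 2 * κ := by rw [hβdef]; field_simp; ring
  have hκ : 0 < κ := by nlinarith [mul_pos hβ (pow_pos hσ 2)]
  have hθ_nonneg : ∀ᵐ ω ∂μ, 0 ≤ θ ω :=
    ae_of_ae_map hθmeas.aemeasurable (hθlaw ▸ ae_nonneg_gammaMeasure 1 α)
  have hθ_int : Integrable θ μ := by
    have h := integrable_rpow_gammaMeasure (s := 1) one_pos hα (by norm_num)
    simp only [rpow_one] at h
    exact (integrable_map_measure aestronglyMeasurable_id hθmeas.aemeasurable).mp (hθlaw ▸ h)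
  have hsqrt_int : Integrable (fun ω => √(θ ω)) μ := by
    have h := integrable_rpow_gammaMeasure (s := 1 / 2) one_pos hα (by norm_num)
    simp only [← sqrt_eq_rpow] at h
    exact (integrable_map_measure (by fun_prop) hθmeas.aemeasurable).mp (hθlaw ▸ h)
  have hjoint : μ.map (fun ω => (θ ω, N ω)) = (expMeasure α).prod (gaussianReal 0 1) := by
    rw [← hθlaw, ← hNlaw]
    exact (indepFun_iff_map_prod_eq_prod_map_map hθmeas.aemeasurable
      hNmeas.aemeasurable).mp hindep
  set F : ℝ × ℝ → ENNReal := fun p => ENNReal.ofReal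
    (exp (-β * σ * √p.1 * p.2 - (-β * σ * √p.1) ^ 2 / 2) * (σ * √p.1 * |p.2| + κ * p.1))
  have hFmeas : Measurable F := by fun_prop
  calc ∫⁻ ω, ENNReal.ofReal (M ω ^ β * max (log (M ω)) 0) ∂μ
      ≤ ∫⁻ ω, F (θ ω, N ω) ∂μ := by
        refine lintegral_mono_ae (hθ_nonneg.mono fun ω ht => ENNReal.ofReal_le_ofReal ?_)
        rw [hM]
        exact exp_rpow_mul_max_log_exp_le hσ.le hκ.le hκβ ht
    _ = ∫⁻ t, ∫⁻ x, F (t, x) ∂gaussianReal 0 1 ∂expMeasure α := by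
        rw [← lintegral_map hFmeas (hθmeas.prodMk hNmeas), hjoint,
          lintegral_prod _ hFmeas.aemeasurable]
    _ ≤ ∫⁻ t, ENNReal.ofReal (σ * √(2 / π) * √t + (β * σ ^ 2 + κ) * t) ∂expMeasure α := by
        refine lintegral_mono_ae ((ae_nonneg_gammaMeasure 1 α).mono fun t ht => ?_)
        refine (lintegral_exp_mul_gaussianReal_le (a := σ * √t) (b := κ * t) (c := -β * σ * √t)
          (by positivity) (by positivity)).trans_eq ?_
        rw [neg_mul, neg_mul, abs_neg, abs_of_nonneg (by positivity)]
        congr 1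
        linear_combination (β * σ ^ 2) * mul_self_sqrt ht
    _ = ∫⁻ ω, ENNReal.ofReal (σ * √(2 / π) * √(θ ω) + (β * σ ^ 2 + κ) * θ ω) ∂μ := by
        rw [← hθlaw, lintegral_map (by fun_prop) hθmeas]
    _ = _ := by
        have hint : Integrable (fun ω => σ * √(2 / π) * √(θ ω) + (β * σ ^ 2 + κ) * θ ω) μ :=
          (hsqrt_int.const_mul _).add (hθ_int.const_mul _)
        rw [← ofReal_integral_eq_lintegral_ofReal hint
          (hθ_nonneg.mono fun ω ht => by dsimp; positivity),
          integral_add (hsqrt_int.const_mul _) (hθ_int.const_mul _), integral_const_mul,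
          integral_const_mul, add_comm]
end

section
/- Let (M_j)_{j≥1} and (Q_j)_{j≥1} be sequences of nonnegative random variables such that for some 0 < δ ≤ 1: the M_j are i.i.d. with ρ := E[M_1^δ] < 1, the Q_j are identically distributed with E[Q_1^δ] < ∞, and for each k ≥ 2 the variable Q_k is independent of (M_1, …, M_{k-1}). Then the series R = Q_1 + Σ_{k≥2} Q_k ∏_{j=1}^{k-1} M_j converges almost surely to a finite random variable, and E[R^δ] ≤ E[Q_1^δ] / (1 - ρ). -/
/-!
Write `Φ x = x ^ δ`. Since `0 < δ ≤ 1`, `Φ` is subadditive and multiplicative on `[0, ∞)`, so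
`Φ(Y_n) ≤ Σ_{k<n} Φ(Q_k) ∏_{j<k} Φ(M_j)`. Independence factorises the expectation of the `k`-th
term as `E[Φ(Q_1)] ρ^k`, hence `E[Φ(Y_n)] ≤ E[Φ(Q_1)] / (1 - ρ)` uniformly in `n`. By monotone
convergence `sup_n Φ(Y_n)` has the same bound, so it is a.s. finite: the increasing partial sums
are a.s. bounded, hence convergent, and the bound passes to the limit.
-/

open MeasureTheory ProbabilityTheory Real Filter Finset
open scoped ENNReal

theorem Real.rpow_sum_le_sum_rpow {ι : Type*} (s : Finset ι) {f : ι → ℝ} (hf : ∀ i ∈ s, 0 ≤ f i)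
    {p : ℝ} (hp0 : 0 < p) (hp1 : p ≤ 1) : (∑ i ∈ s, f i) ^ p ≤ ∑ i ∈ s, f i ^ p := by
  induction s using Finset.cons_induction with
  | empty => simp [zero_rpow hp0.ne']
  | cons a s ha ih =>
    rw [forall_mem_cons] at hf
    rw [sum_cons, sum_cons]
    exact (rpow_add_le_add_rpow hf.1 (sum_nonneg hf.2) hp0.le hp1).trans
      (add_le_add_right (ih hf.2) _)

def perpetuitySum {R : Type*} [CommSemiring R] (m q : ℕ → R) (n : ℕ) : R :=
  ∑ k ∈ range n, q k * ∏ j ∈ range k, m j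

section PerpetuitySum

variable {R : Type*} [CommSemiring R] [PartialOrder R] [IsOrderedRing R]

lemma perpetuitySum_nonneg {m q : ℕ → R} (hm : ∀ j, 0 ≤ m j) (hq : ∀ k, 0 ≤ q k) (n : ℕ) :
    0 ≤ perpetuitySum m q n :=
  sum_nonneg fun k _ => mul_nonneg (hq k) (prod_nonneg fun j _ => hm j)

lemma perpetuitySum_mono {m q : ℕ → R} (hm : ∀ j, 0 ≤ m j) (hq : ∀ k, 0 ≤ q k) :
    Monotone (perpetuitySum m q) :=
  monotone_nat_of_le_succ fun n => by
    rw [perpetuitySum, perpetuitySum, sum_range_succ]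
    exact le_add_of_nonneg_right (mul_nonneg (hq n) (prod_nonneg fun j _ => hm j))

lemma ofReal_rpow_perpetuitySum_le {m q : ℕ → ℝ} (hm : ∀ j, 0 ≤ m j) (hq : ∀ k, 0 ≤ q k)
    {δ : ℝ} (hδ0 : 0 < δ) (hδ1 : δ ≤ 1) (n : ℕ) :
    ENNReal.ofReal (perpetuitySum m q n ^ δ) ≤
      perpetuitySum (fun j => ENNReal.ofReal (m j ^ δ)) (fun k => ENNReal.ofReal (q k ^ δ)) n := by
  have hterm : ∀ k, 0 ≤ q k * ∏ j ∈ range k, m j :=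
    fun k => mul_nonneg (hq k) (prod_nonneg fun j _ => hm j)
  calc ENNReal.ofReal (perpetuitySum m q n ^ δ)
      ≤ ENNReal.ofReal (∑ k ∈ range n, (q k * ∏ j ∈ range k, m j) ^ δ) :=
        ENNReal.ofReal_le_ofReal (rpow_sum_le_sum_rpow _ (fun k _ => hterm k) hδ0 hδ1)
    _ = _ := by
        rw [ENNReal.ofReal_sum_of_nonneg fun k _ => rpow_nonneg (hterm k) δ]
        refine sum_congr rfl fun k _ => ?_
        rw [mul_rpow (hq k) (prod_nonneg fun j _ => hm j),
          ← finsetProd_rpow _ _ (fun j _ => hm j), ENNReal.ofReal_mul (rpow_nonneg (hq k) δ),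
          ENNReal.ofReal_prod_of_nonneg fun j _ => rpow_nonneg (hm j) δ]

lemma perpetuitySum_const_le (r a : ℝ≥0∞) (n : ℕ) :
    perpetuitySum (fun _ => r) (fun _ => a) n ≤ a * (1 - r)⁻¹ := by
  simp only [perpetuitySum, prod_const, card_range]
  calc ∑ k ∈ range n, a * r ^ k ≤ ∑' k, a * r ^ k := ENNReal.sum_le_tsum _
    _ = a * (1 - r)⁻¹ := by rw [ENNReal.tsum_mul_left, ENNReal.tsum_geometric]

end PerpetuitySum

section Moments

variable {Ω β γ : Type*} [MeasurableSpace Ω] [MeasurableSpace β] [MeasurableSpace γ]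
  {μ : Measure Ω}

lemma lintegral_mul_prod_range_of_indepFun {X : Ω → β} {Z : ℕ → Ω → γ} {f : β → ℝ≥0∞}
    {g : γ → ℝ≥0∞} (hf : Measurable f) (hg : Measurable g) (hX : Measurable X)
    (hZ : ∀ j, Measurable (Z j)) (hZind : iIndepFun Z μ) {k : ℕ}
    (hXZ : IndepFun X (fun ω (j : Fin k) => Z j ω) μ) :
    ∫⁻ ω, f (X ω) * ∏ j ∈ range k, g (Z j ω) ∂μ =
      (∫⁻ ω, f (X ω) ∂μ) * ∏ j ∈ range k, ∫⁻ ω, g (Z j ω) ∂μ := by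
  have hψ : Measurable fun v : Fin k → γ => ∏ j, g (v j) :=
    Finset.measurable_prod _ fun j _ => hg.comp (measurable_pi_apply j)
  rw [← lintegral_prod_eq_prod_lintegral_of_indepFun _ (fun j ω => g (Z j ω))
    (hZind.comp (fun _ => g) fun _ => hg) fun j => hg.comp (hZ j)]
  simp_rw [← Fin.prod_univ_eq_prod_range fun j => g (Z j _)]
  exact lintegral_mul_eq_lintegral_mul_lintegral_of_indepFun'' (hf.comp hX).aemeasurable
    (hψ.comp (measurable_pi_lambda _ fun j => hZ j)).aemeasurable (hXZ.comp hf hψ)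

lemma lintegral_perpetuitySum_of_indepFun {M : ℕ → Ω → β} {Q : ℕ → Ω → γ} {f : β → ℝ≥0∞}
    {g : γ → ℝ≥0∞} (hf : Measurable f) (hg : Measurable g) (hM : ∀ j, Measurable (M j))
    (hQ : ∀ k, Measurable (Q k)) (hMindep : iIndepFun M μ)
    (hMid : ∀ j, μ.map (M j) = μ.map (M 0)) (hQid : ∀ k, μ.map (Q k) = μ.map (Q 0))
    (hQM : ∀ k, IndepFun (Q k) (fun ω (j : Fin k) => M j ω) μ) (n : ℕ) :
    ∫⁻ ω, perpetuitySum (fun j => f (M j ω)) (fun k => g (Q k ω)) n ∂μ =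
      perpetuitySum (fun _ => ∫⁻ ω, f (M 0 ω) ∂μ) (fun _ => ∫⁻ ω, g (Q 0 ω) ∂μ) n := by
  have hMf : ∀ j, ∫⁻ ω, f (M j ω) ∂μ = ∫⁻ ω, f (M 0 ω) ∂μ := fun j =>
    ((IdentDistrib.mk (hM j).aemeasurable (hM 0).aemeasurable (hMid j)).comp hf).lintegral_eq
  have hQg : ∀ k, ∫⁻ ω, g (Q k ω) ∂μ = ∫⁻ ω, g (Q 0 ω) ∂μ := fun k =>
    ((IdentDistrib.mk (hQ k).aemeasurable (hQ 0).aemeasurable (hQid k)).comp hg).lintegral_eq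
  simp only [perpetuitySum]
  rw [lintegral_finsetSum (f := fun k ω => g (Q k ω) * ∏ j ∈ range k, f (M j ω)) _ fun k _ =>
    (hg.comp (hQ k)).mul (Finset.measurable_prod _ fun j _ => hf.comp (hM j))]
  refine sum_congr rfl fun k _ => ?_
  rw [lintegral_mul_prod_range_of_indepFun hg hf (hQ k) hM hMindep (hQM k), hQg,
    prod_congr rfl fun j _ => hMf j]

end Moments

section MonotoneConvergence

variable {Ω : Type*} [MeasurableSpace Ω] {μ : Measure Ω} {δ : ℝ}

lemma bddAbove_range_of_iSup_ofReal_rpow_ne_top {y : ℕ → ℝ} (hy : ∀ n, 0 ≤ y n) (hδ : 0 < δ)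
    (h : ⨆ n, ENNReal.ofReal (y n ^ δ) ≠ ∞) : BddAbove (Set.range y) := by
  refine ⟨(⨆ n, ENNReal.ofReal (y n ^ δ)).toReal ^ δ⁻¹, ?_⟩
  rintro _ ⟨n, rfl⟩
  have hle : y n ^ δ ≤ (⨆ n, ENNReal.ofReal (y n ^ δ)).toReal :=
    (ENNReal.ofReal_le_iff_le_toReal h).1 (le_iSup (fun n => ENNReal.ofReal (y n ^ δ)) n)
  calc y n = (y n ^ δ) ^ δ⁻¹ := (rpow_rpow_inv (hy n) hδ.ne').symm
    _ ≤ _ := rpow_le_rpow (rpow_nonneg (hy n) δ) hle (inv_nonneg.2 hδ.le)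

lemma ofReal_rpow_ciSup_le {y : ℕ → ℝ} (hmono : Monotone y) (hbdd : BddAbove (Set.range y))
    (hδ : 0 < δ) : ENNReal.ofReal ((⨆ n, y n) ^ δ) ≤ ⨆ n, ENNReal.ofReal (y n ^ δ) := by
  have hcont : Continuous fun x : ℝ => ENNReal.ofReal (x ^ δ) :=
    ENNReal.continuous_ofReal.comp (continuous_id.rpow_const fun _ => Or.inr hδ.le)
  exact le_of_tendsto ((hcont.tendsto _).comp (tendsto_atTop_ciSup hmono hbdd))
    (Eventually.of_forall fun n => le_iSup (fun n => ENNReal.ofReal (y n ^ δ)) n)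

theorem ae_tendsto_ciSup_and_lintegral_ofReal_rpow_le {Y : ℕ → Ω → ℝ}
    (hY : ∀ n, Measurable (Y n)) (hY0 : ∀ n ω, 0 ≤ Y n ω) (hmono : ∀ ω, Monotone (Y · ω))
    (hδ : 0 < δ) {B : ℝ≥0∞} (hB : B ≠ ∞)
    (hle : ∀ n, ∫⁻ ω, ENNReal.ofReal (Y n ω ^ δ) ∂μ ≤ B) :
    (∀ᵐ ω ∂μ, Tendsto (Y · ω) atTop (nhds (⨆ n, Y n ω))) ∧
      ∫⁻ ω, ENNReal.ofReal ((⨆ n, Y n ω) ^ δ) ∂μ ≤ B := by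
  have hmeas : ∀ n, Measurable fun ω => ENNReal.ofReal (Y n ω ^ δ) :=
    fun n => ((hY n).pow_const δ).ennreal_ofReal
  have hsup : ∫⁻ ω, ⨆ n, ENNReal.ofReal (Y n ω ^ δ) ∂μ ≤ B := by
    rw [lintegral_iSup hmeas fun n m hnm ω =>
      ENNReal.ofReal_le_ofReal (rpow_le_rpow (hY0 n ω) (hmono ω hnm) hδ.le)]
    exact iSup_le hle
  have hbdd : ∀ᵐ ω ∂μ, BddAbove (Set.range (Y · ω)) :=
    (ae_lt_top (Measurable.iSup hmeas) (ne_top_of_le_ne_top hB hsup)).mono fun ω hω =>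
      bddAbove_range_of_iSup_ofReal_rpow_ne_top (hY0 · ω) hδ hω.ne
  refine ⟨hbdd.mono fun ω hω => tendsto_atTop_ciSup (hmono ω) hω, ?_⟩
  exact (lintegral_mono_ae (hbdd.mono fun ω hω => ofReal_rpow_ciSup_le (hmono ω) hω hδ)).trans hsup

end MonotoneConvergence

/-- Perpetuity series: with `(M_j)` i.i.d. nonnegative, `ρ = E[M_1^δ] < 1`,
`(Q_j)` identically distributed nonnegative with `E[Q_1^δ] < ∞`, and `Q_k` independent
of `(M_1, …, M_{k-1})`, the series `R = Q_1 + Σ_{k≥2} Q_k ∏_{j<k} M_j` converges a.s.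
to a finite limit and `E[R^δ] ≤ E[Q_1^δ]/(1-ρ)`.  (Indices are shifted: `M 0 = M_1`.) -/
theorem stmt_6 {Ω : Type*} [MeasurableSpace Ω] (μ : Measure Ω) [IsProbabilityMeasure μ]
    (M Q : ℕ → Ω → ℝ) (hMmeas : ∀ n, Measurable (M n)) (hQmeas : ∀ n, Measurable (Q n))
    (hMnn : ∀ n ω, 0 ≤ M n ω) (hQnn : ∀ n ω, 0 ≤ Q n ω)
    {δ : ℝ} (hδ0 : 0 < δ) (hδ1 : δ ≤ 1)
    (hMindep : iIndepFun M μ)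
    (hMid : ∀ n, Measure.map (M n) μ = Measure.map (M 0) μ)
    (hQid : ∀ n, Measure.map (Q n) μ = Measure.map (Q 0) μ)
    (hQM : ∀ k : ℕ, 1 ≤ k → IndepFun (Q k) (fun ω => fun j : Fin k => M j ω) μ)
    (hMint : Integrable (fun ω => M 0 ω ^ δ) μ)
    (hρ : ∫ ω, M 0 ω ^ δ ∂μ < 1)
    (hQint : Integrable (fun ω => Q 0 ω ^ δ) μ)
    (Y : ℕ → Ω → ℝ)
    (hY : ∀ n ω, Y n ω = ∑ k ∈ Finset.range n, Q k ω * ∏ j ∈ Finset.range k, M j ω) :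
    (∀ᵐ ω ∂μ, ∃ L : ℝ, Tendsto (fun n => Y n ω) atTop (nhds L)) ∧
      ∫⁻ ω, ENNReal.ofReal ((⨆ n, Y n ω) ^ δ) ∂μ ≤
        ENNReal.ofReal ((∫ ω, Q 0 ω ^ δ ∂μ) / (1 - ∫ ω, M 0 ω ^ δ ∂μ)) := by
  obtain rfl : Y = fun n ω => perpetuitySum (M · ω) (Q · ω) n := funext₂ hY
  have hQM' : ∀ k, IndepFun (Q k) (fun ω (j : Fin k) => M j ω) μ
    | 0 => by
      rw [Subsingleton.elim (fun ω (j : Fin 0) => M j ω) fun _ => isEmptyElim]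
      exact indepFun_const_right _ _
    | k + 1 => hQM (k + 1) k.succ_pos
  have hΦ : Measurable fun x : ℝ => ENNReal.ofReal (x ^ δ) :=
    (measurable_id.pow_const δ).ennreal_ofReal
  set r := ∫⁻ ω, ENNReal.ofReal (M 0 ω ^ δ) ∂μ
  set a := ∫⁻ ω, ENNReal.ofReal (Q 0 ω ^ δ) ∂μ
  have hr : r = ENNReal.ofReal (∫ ω, M 0 ω ^ δ ∂μ) :=
    (ofReal_integral_eq_lintegral_ofReal hMint (ae_of_all _ fun ω => rpow_nonneg (hMnn 0 ω) δ)).symm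
  have ha : a = ENNReal.ofReal (∫ ω, Q 0 ω ^ δ ∂μ) :=
    (ofReal_integral_eq_lintegral_ofReal hQint (ae_of_all _ fun ω => rpow_nonneg (hQnn 0 ω) δ)).symm
  have hB : a * (1 - r)⁻¹ ≠ ∞ :=
    ENNReal.mul_ne_top (ha ▸ ENNReal.ofReal_ne_top)
      (ENNReal.inv_ne_top.2 (tsub_pos_of_lt (hr ▸ ENNReal.ofReal_lt_one.2 hρ)).ne')
  have hbound : ∀ n, ∫⁻ ω, ENNReal.ofReal (perpetuitySum (M · ω) (Q · ω) n ^ δ) ∂μ ≤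
      a * (1 - r)⁻¹ := fun n =>
    calc _ ≤ _ := lintegral_mono fun ω =>
          ofReal_rpow_perpetuitySum_le (hMnn · ω) (hQnn · ω) hδ0 hδ1 n
      _ = _ := lintegral_perpetuitySum_of_indepFun hΦ hΦ hMmeas hQmeas hMindep hMid hQid hQM' n
      _ ≤ _ := perpetuitySum_const_le r a n
  obtain ⟨hconv, hint⟩ := ae_tendsto_ciSup_and_lintegral_ofReal_rpow_le
    (fun n => by unfold perpetuitySum; fun_prop)
    (fun n ω => perpetuitySum_nonneg (hMnn · ω) (hQnn · ω) n)
    (fun ω => perpetuitySum_mono (hMnn · ω) (hQnn · ω)) hδ0 hB hbound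
  refine ⟨hconv.mono fun ω h => ⟨_, h⟩, hint.trans_eq ?_⟩
  rw [hr, ha, ENNReal.ofReal_div_of_pos (sub_pos.2 hρ),
    ENNReal.ofReal_sub 1 (integral_nonneg fun ω => rpow_nonneg (hMnn 0 ω) δ), ENNReal.ofReal_one,
    div_eq_mul_inv]
end

section
/- Let R be a nonnegative random variable satisfying the distributional equation R =_d Q + M·R' where R' has the same law as R and is independent of the pair (M, Q), with M, Q ≥ 0. Let q > 0 with ‖M‖_q := (E[M^q])^{1/q} < 1 and ‖Q‖_q < ∞. Then ‖R‖_q ≤ ‖Q‖_q / (1 - ‖M‖_q), i.e. E[R^q] ≤ (E[Q^q])^{1/q} (1 - (E[M^q])^{1/q})^{-1} raised to the power q. -/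
/-!
The naive estimate `‖R‖_q ≤ ‖Q‖_q + ‖M‖_q ‖R‖_q` is useless unless `‖R‖_q < ∞`, which is not
known in advance. Work instead with the truncations `h t = ‖min R t‖_q`: for every `ε > 0` they
satisfy an affine bound `h t ≤ ε t + T`. Conditioning on `M`, the fixed-point equation turns
any affine bound `h t ≤ ε t + S` into `h t ≤ ‖Q‖_q + ε t + ‖M‖_q S`, so the least intercept `S`
is finite and at most `‖Q‖_q + ‖M‖_q S`, i.e. `S ≤ ‖Q‖_q / (1 - ‖M‖_q)`. Let `ε → 0`, then
`t → ∞`.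
-/

open MeasureTheory ProbabilityTheory Filter Topology
open scoped ENNReal NNReal

lemma ENNReal.le_div_of_le_add_mul {x c m : ℝ≥0∞} (hx : x ≠ ⊤) (hm : m < 1)
    (h : x ≤ c + m * x) : x ≤ c / (1 - m) := by
  rw [ENNReal.le_div_iff_mul_le (Or.inl (tsub_pos_of_lt hm).ne')
    (Or.inl (ENNReal.sub_ne_top ENNReal.one_ne_top)), ENNReal.mul_sub fun _ _ => hx, mul_one,
    mul_comm]
  exact tsub_le_iff_right.mpr h

lemma ENNReal.le_of_forall_pos_le_mul_add {a b c : ℝ≥0∞} (hc : c ≠ ⊤)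
    (h : ∀ ε, 0 < ε → a ≤ ε * c + b) : a ≤ b := by
  have hlim : Tendsto (fun n : ℕ => (n : ℝ≥0∞)⁻¹ * c + b) atTop (𝓝 (0 * c + b)) :=
    (ENNReal.Tendsto.mul_const ENNReal.tendsto_inv_nat_nhds_zero (Or.inr hc)).add_const b
  rw [zero_mul, zero_add] at hlim
  exact ge_of_tendsto' hlim fun n => h _ (ENNReal.inv_pos.2 (ENNReal.natCast_ne_top n))

lemma le_mul_add_div_of_affine_bound_step {h : ℝ → ℝ≥0∞} {ε c m T : ℝ≥0∞} (hm : m < 1)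
    (hT : T ≠ ⊤) (hgrowth : ∀ t, 0 ≤ t → h t ≤ ε * ENNReal.ofReal t + T)
    (hstep : ∀ S ≠ ⊤, (∀ s, 0 ≤ s → h s ≤ ε * ENNReal.ofReal s + S) →
      ∀ t, 0 ≤ t → h t ≤ c + (ε * ENNReal.ofReal t + m * S))
    {t : ℝ} (ht : 0 ≤ t) : h t ≤ ε * ENNReal.ofReal t + c / (1 - m) := by
  set S := ⨆ (s : ℝ) (_ : 0 ≤ s), h s - ε * ENNReal.ofReal s
  have hST : S ≤ T := iSup₂_le fun s hs => tsub_le_iff_left.2 (hgrowth s hs)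
  have hbound : ∀ s, 0 ≤ s → h s ≤ ε * ENNReal.ofReal s + S := fun s hs =>
    tsub_le_iff_left.1 (le_iSup₂ (f := fun s (_ : 0 ≤ s) => h s - ε * ENNReal.ofReal s) s hs)
  have hS_top : S ≠ ⊤ := ne_top_of_le_ne_top hT hST
  have hS : S ≤ c + m * S := iSup₂_le fun s hs => tsub_le_iff_left.2 <|
    (hstep S hS_top hbound s hs).trans_eq (add_left_comm _ _ _)
  exact (hbound t ht).trans (by gcongr; exact ENNReal.le_div_of_le_add_mul hS_top hm hS)

namespace ProbabilityTheory

variable {Ω α β : Type*} [MeasurableSpace Ω] [MeasurableSpace α] [MeasurableSpace β]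
  {μ : Measure Ω} [IsFiniteMeasure μ] {X : Ω → α} {Y : Ω → β}

theorem IndepFun.lintegral_comp_eq_lintegral_lintegral
    (hXY : IndepFun X Y μ) (hX : Measurable X) (hY : Measurable Y) {g : α × β → ℝ≥0∞}
    (hg : Measurable g) :
    ∫⁻ ω, g (X ω, Y ω) ∂μ = ∫⁻ ω₀, ∫⁻ ω, g (X ω₀, Y ω) ∂μ ∂μ := by
  have hmap : μ.map (fun ω => (X ω, Y ω)) = (μ.prod μ).map (Prod.map X Y) := by
    rw [← Measure.map_prod_map _ _ hX hY,
      (indepFun_iff_map_prod_eq_prod_map_map hX.aemeasurable hY.aemeasurable).mp hXY]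
  calc ∫⁻ ω, g (X ω, Y ω) ∂μ = ∫⁻ z, g z ∂(μ.map fun ω => (X ω, Y ω)) :=
        (lintegral_map hg (hX.prodMk hY)).symm
    _ = ∫⁻ w, g (X w.1, Y w.2) ∂(μ.prod μ) := by
        rw [hmap, lintegral_map hg (hX.prodMap hY)]; rfl
    _ = _ := lintegral_prod _ (hg.comp (hX.prodMap hY)).aemeasurable

theorem IndepFun.eLpNorm_comp_le {E : Type*} [NormedAddCommGroup E] [MeasurableSpace E]
    [OpensMeasurableSpace E] {p : ℝ≥0∞} (hp0 : p ≠ 0) (hp_top : p ≠ ⊤)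
    (hXY : IndepFun X Y μ) (hX : Measurable X) (hY : Measurable Y) {f : α → β → E}
    (hf : Measurable (Function.uncurry f)) {G : Ω → ℝ≥0∞}
    (hG : ∀ ω₀, eLpNorm (fun ω => f (X ω₀) (Y ω)) p μ ≤ G ω₀) :
    eLpNorm (fun ω => f (X ω) (Y ω)) p μ ≤ eLpNorm G p μ := by
  have hr : 0 < p.toReal := ENNReal.toReal_pos hp0 hp_top
  simp only [eLpNorm_eq_lintegral_rpow_enorm_toReal hp0 hp_top, enorm_eq_self] at hG ⊢
  refine ENNReal.rpow_le_rpow ?_ (by positivity)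
  rw [hXY.lintegral_comp_eq_lintegral_lintegral hX hY (g := fun z => ‖f z.1 z.2‖ₑ ^ p.toReal)
    (hf.enorm.pow_const _)]
  refine lintegral_mono fun ω₀ => ?_
  have := ENNReal.rpow_le_rpow (hG ω₀) hr.le
  rwa [← ENNReal.rpow_mul, one_div_mul_cancel hr.ne', ENNReal.rpow_one] at this

end ProbabilityTheory

namespace MeasureTheory

variable {Ω : Type*} [MeasurableSpace Ω] {μ : Measure Ω} {p : ℝ≥0∞} {X : Ω → ℝ}

theorem tendsto_measure_setOf_lt_atTop [IsFiniteMeasure μ] (hX : Measurable X) :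
    Tendsto (fun T : ℝ => μ {ω | T < X ω}) atTop (𝓝 0) := by
  have hempty : ⋂ T : ℝ, {ω | T < X ω} = ∅ :=
    Set.iInter_eq_empty_iff.2 fun ω => ⟨X ω, lt_irrefl (X ω)⟩
  have := tendsto_measure_iInter_atTop (μ := μ)
    (fun T => (measurableSet_lt measurable_const hX).nullMeasurableSet)
    (fun T T' hTT' ω (hω : T' < X ω) => hTT'.trans_lt hω) ⟨0, measure_ne_top μ _⟩
  rwa [hempty, measure_empty] at this

theorem exists_eLpNorm_min_le_mul_add [IsProbabilityMeasure μ] (hX : Measurable X)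
    (hX0 : ∀ ω, 0 ≤ X ω) (hp : 1 ≤ p) (hp_top : p ≠ ⊤) {ε : ℝ≥0∞} (hε : 0 < ε) :
    ∃ T ≠ ⊤, ∀ t, 0 ≤ t → eLpNorm (fun ω => min (X ω) t) p μ ≤ ε * ENNReal.ofReal t + T := by
  have hp0 : p ≠ 0 := (zero_lt_one.trans_le hp).ne'
  have htail : Tendsto (fun T : ℝ => μ {ω | T < X ω} ^ (1 / p.toReal)) atTop (𝓝 0) := by
    have := ((ENNReal.continuous_rpow_const (y := 1 / p.toReal)).tendsto 0).comp
      (tendsto_measure_setOf_lt_atTop (μ := μ) hX)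
    rwa [ENNReal.zero_rpow_of_pos (by simp [ENNReal.toReal_pos hp0 hp_top])] at this
  obtain ⟨T, hTε, hT⟩ :=
    ((htail.eventually (gt_mem_nhds hε)).and (eventually_ge_atTop 0)).exists
  refine ⟨ENNReal.ofReal T, ENNReal.ofReal_ne_top, fun t ht => ?_⟩
  have hs : MeasurableSet {ω | T < X ω} := measurableSet_lt measurable_const hX
  have hpt : ∀ ω, ‖min (X ω) t‖ ≤ min (X ω) T + {ω | T < X ω}.indicator (fun _ => t) ω := by
    intro ω
    rw [Real.norm_of_nonneg (le_min (hX0 ω) ht)]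
    by_cases hω : T < X ω
    · rw [Set.indicator_of_mem (show ω ∈ {ω | T < X ω} from hω)]
      exact (min_le_right _ _).trans (le_add_of_nonneg_left (le_min (hX0 ω) hT))
    · rw [Set.indicator_of_notMem (show ω ∉ {ω | T < X ω} from hω), add_zero,
        min_eq_left (not_lt.1 hω)]
      exact min_le_left _ _
  calc eLpNorm (fun ω => min (X ω) t) p μ
      ≤ eLpNorm ((fun ω => min (X ω) T) + {ω | T < X ω}.indicator fun _ => t) p μ :=
        eLpNorm_mono_real hpt
    _ ≤ eLpNorm (fun ω => min (X ω) T) p μ + eLpNorm ({ω | T < X ω}.indicator fun _ => t) p μ :=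
        eLpNorm_add_le (hX.min measurable_const).aestronglyMeasurable
          (measurable_const.indicator hs).aestronglyMeasurable hp
    _ ≤ ENNReal.ofReal T + ENNReal.ofReal t * ε := by
        gcongr
        · refine (eLpNorm_le_of_ae_bound (C := T) (ae_of_all _ fun ω => ?_)).trans (by simp)
          rw [Real.norm_of_nonneg (le_min (hX0 ω) hT)]
          exact min_le_right _ _
        · rw [eLpNorm_indicator_const hs hp0 hp_top, Real.enorm_of_nonneg ht]
          gcongr
    _ = ε * ENNReal.ofReal t + ENNReal.ofReal T := by rw [add_comm, mul_comm]

theorem eLpNorm_min_mul_le {ε S : ℝ≥0∞}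
    (hS : ∀ s, 0 ≤ s → eLpNorm (fun ω => min (X ω) s) p μ ≤ ε * ENNReal.ofReal s + S)
    {c t : ℝ} (hc : 0 ≤ c) (ht : 0 ≤ t) :
    eLpNorm (fun ω => min (c * X ω) t) p μ ≤ ε * ENNReal.ofReal t + ENNReal.ofReal c * S := by
  rcases hc.eq_or_lt with rfl | hc
  · simp [min_eq_left ht]
  have hscale : (fun ω => min (c * X ω) t) = c • fun ω => min (X ω) (t / c) := by
    ext ω
    rw [Pi.smul_apply, smul_eq_mul, mul_min_of_nonneg _ _ hc.le, mul_div_cancel₀ _ hc.ne']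
  calc eLpNorm (fun ω => min (c * X ω) t) p μ
      = ENNReal.ofReal c * eLpNorm (fun ω => min (X ω) (t / c)) p μ := by
        rw [hscale, eLpNorm_const_smul, Real.enorm_of_nonneg hc.le]
    _ ≤ ENNReal.ofReal c * (ε * ENNReal.ofReal (t / c) + S) := by
        gcongr
        exact hS _ (div_nonneg ht hc.le)
    _ = ε * ENNReal.ofReal t + ENNReal.ofReal c * S := by
        rw [mul_add, mul_left_comm, ← ENNReal.ofReal_mul hc.le, mul_div_cancel₀ _ hc.ne']

theorem eLpNorm_le_of_forall_eLpNorm_min_le (hX : Measurable X) {K : ℝ≥0∞}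
    (h : ∀ t, 0 ≤ t → eLpNorm (fun ω => min (X ω) t) p μ ≤ K) : eLpNorm X p μ ≤ K := by
  refine (Lp.eLpNorm_lim_le_liminf_eLpNorm (f := fun (n : ℕ) ω => min (X ω) n)
    (fun n => (hX.min measurable_const).aestronglyMeasurable) X (ae_of_all _ fun ω => ?_)).trans ?_
  · exact tendsto_const_nhds.congr' <| (eventually_ge_atTop ⌈X ω⌉₊).mono fun n hn =>
      (min_eq_left ((Nat.le_ceil _).trans (Nat.cast_le.2 hn))).symm
  · exact liminf_le_of_frequently_le' (Frequently.of_forall fun n => h n n.cast_nonneg)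

theorem eLpNorm_min_le_of_map_eq_add_mul [IsProbabilityMeasure μ] {R R' M Q : Ω → ℝ}
    (hR : Measurable R) (hR' : Measurable R') (hM : Measurable M) (hQ : Measurable Q)
    (hR'nn : ∀ ω, 0 ≤ R' ω) (hMnn : ∀ ω, 0 ≤ M ω) (hQnn : ∀ ω, 0 ≤ Q ω)
    (hcopy : μ.map R' = μ.map R) (hindep : IndepFun M R' μ)
    (hdist : μ.map R = μ.map fun ω => Q ω + M ω * R' ω) (hp : 1 ≤ p) (hp_top : p ≠ ⊤)
    {ε S : ℝ≥0∞} (hS_top : S ≠ ⊤)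
    (hS : ∀ s, 0 ≤ s → eLpNorm (fun ω => min (R ω) s) p μ ≤ ε * ENNReal.ofReal s + S)
    {t : ℝ} (ht : 0 ≤ t) :
    eLpNorm (fun ω => min (R ω) t) p μ
      ≤ eLpNorm Q p μ + (ε * ENNReal.ofReal t + eLpNorm M p μ * S) := by
  have hp0 : p ≠ 0 := (zero_lt_one.trans_le hp).ne'
  have hR'R : IdentDistrib R' R μ μ := ⟨hR'.aemeasurable, hR.aemeasurable, hcopy⟩
  have hRsum : IdentDistrib R (fun ω => Q ω + M ω * R' ω) μ μ :=
    ⟨hR.aemeasurable, (hQ.add (hM.mul hR')).aemeasurable, hdist⟩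
  have hS' : ∀ s, 0 ≤ s → eLpNorm (fun ω => min (R' ω) s) p μ ≤ ε * ENNReal.ofReal s + S :=
    fun s hs => ((hR'R.comp (measurable_id.min measurable_const)).eLpNorm_eq p).trans_le (hS s hs)
  have hpt : ∀ ω, ‖min (Q ω + M ω * R' ω) t‖ ≤ Q ω + min (M ω * R' ω) t := fun ω => by
    rw [Real.norm_of_nonneg (le_min (add_nonneg (hQnn ω) (mul_nonneg (hMnn ω) (hR'nn ω))) ht),
      ← min_add_add_left]
    exact min_le_min_left _ (le_add_of_nonneg_left (hQnn ω))
  lift S to ℝ≥0 using hS_top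
  calc eLpNorm (fun ω => min (R ω) t) p μ
      = eLpNorm (fun ω => min (Q ω + M ω * R' ω) t) p μ :=
        (hRsum.comp (measurable_id.min measurable_const)).eLpNorm_eq p
    _ ≤ eLpNorm (Q + fun ω => min (M ω * R' ω) t) p μ := eLpNorm_mono_real hpt
    _ ≤ eLpNorm Q p μ + eLpNorm (fun ω => min (M ω * R' ω) t) p μ :=
        eLpNorm_add_le hQ.aestronglyMeasurable
          ((hM.mul hR').min measurable_const).aestronglyMeasurable hp
    _ ≤ eLpNorm Q p μ
          + eLpNorm (fun ω => ε * ENNReal.ofReal t + ENNReal.ofReal (M ω) * S) p μ := by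
        gcongr
        exact hindep.eLpNorm_comp_le (f := fun m r => min (m * r) t) hp0 hp_top hM hR'
          (by fun_prop) fun ω₀ => eLpNorm_min_mul_le hS' (hMnn ω₀) ht
    _ ≤ eLpNorm Q p μ + (ε * ENNReal.ofReal t + eLpNorm M p μ * S) := by
        gcongr
        refine (eLpNorm_add_le (f := fun _ => ε * ENNReal.ofReal t)
          (g := fun ω => ENNReal.ofReal (M ω) * S) aestronglyMeasurable_const
          (hM.ennreal_ofReal.mul_const _).aestronglyMeasurable hp).trans ?_
        gcongr
        · simp [eLpNorm_const _ hp0 (IsProbabilityMeasure.ne_zero μ)]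
        · refine (eLpNorm_le_nnreal_smul_eLpNorm_of_ae_le_mul' (c := S)
            (ae_of_all _ fun ω => ?_) p).trans_eq (by rw [ENNReal.smul_def, smul_eq_mul, mul_comm])
          rw [enorm_eq_self, Real.enorm_of_nonneg (hMnn ω), mul_comm]

end MeasureTheory

theorem stmt_7_general {Ω : Type*} [MeasurableSpace Ω] (μ : Measure Ω) [IsProbabilityMeasure μ]
    (R R' M Q : Ω → ℝ)
    (hRmeas : Measurable R) (hR'meas : Measurable R') (hMmeas : Measurable M)
    (hQmeas : Measurable Q)
    (hRnn : ∀ ω, 0 ≤ R ω) (hR'nn : ∀ ω, 0 ≤ R' ω)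
    (hMnn : ∀ ω, 0 ≤ M ω) (hQnn : ∀ ω, 0 ≤ Q ω)
    (hcopy : Measure.map R' μ = Measure.map R μ)
    (hindep : IndepFun R' (fun ω => (M ω, Q ω)) μ)
    (hdist : Measure.map R μ = Measure.map (fun ω => Q ω + M ω * R' ω) μ)
    {q : ℝ} (hq : 1 ≤ q)
    (hM : eLpNorm M (ENNReal.ofReal q) μ < 1) :
    eLpNorm R (ENNReal.ofReal q) μ ≤
      eLpNorm Q (ENNReal.ofReal q) μ / (1 - eLpNorm M (ENNReal.ofReal q) μ) := by
  have hp : 1 ≤ ENNReal.ofReal q := ENNReal.one_le_ofReal.2 hq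
  refine eLpNorm_le_of_forall_eLpNorm_min_le hRmeas fun t ht => ?_
  refine ENNReal.le_of_forall_pos_le_mul_add (c := ENNReal.ofReal t) ENNReal.ofReal_ne_top
    fun ε hε => ?_
  obtain ⟨T, hT, hgrowth⟩ :=
    exists_eLpNorm_min_le_mul_add (μ := μ) hRmeas hRnn hp ENNReal.ofReal_ne_top hε
  exact le_mul_add_div_of_affine_bound_step hM hT hgrowth
    (fun S hS hbound s hs => eLpNorm_min_le_of_map_eq_add_mul hRmeas hR'meas hMmeas hQmeas hR'nn
      hMnn hQnn hcopy (hindep.comp measurable_id measurable_fst).symm hdist hp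
      ENNReal.ofReal_ne_top hS hbound hs) ht

/-- If `R ≥ 0` satisfies `R =_d Q + M·R'` with `R'` a copy of `R` independent of
`(M, Q)`, `M, Q ≥ 0`, and `‖M‖_q < 1`, `‖Q‖_q < ∞` (with `q ≥ 1` so that Minkowski's
inequality applies), then `‖R‖_q ≤ ‖Q‖_q / (1 - ‖M‖_q)`. -/
theorem stmt_7 {Ω : Type*} [MeasurableSpace Ω] (μ : Measure Ω) [IsProbabilityMeasure μ]
    (R R' M Q : Ω → ℝ)
    (hRmeas : Measurable R) (hR'meas : Measurable R') (hMmeas : Measurable M)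
    (hQmeas : Measurable Q)
    (hRnn : ∀ ω, 0 ≤ R ω) (hR'nn : ∀ ω, 0 ≤ R' ω)
    (hMnn : ∀ ω, 0 ≤ M ω) (hQnn : ∀ ω, 0 ≤ Q ω)
    (hcopy : Measure.map R' μ = Measure.map R μ)
    (hindep : IndepFun R' (fun ω => (M ω, Q ω)) μ)
    (hdist : Measure.map R μ = Measure.map (fun ω => Q ω + M ω * R' ω) μ)
    {q : ℝ} (hq : 1 ≤ q)
    (hM : eLpNorm M (ENNReal.ofReal q) μ < 1)
    (hQ : eLpNorm Q (ENNReal.ofReal q) μ < ⊤) :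
    eLpNorm R (ENNReal.ofReal q) μ ≤
      eLpNorm Q (ENNReal.ofReal q) μ / (1 - eLpNorm M (ENNReal.ofReal q) μ) :=
  stmt_7_general μ R R' M Q hRmeas hR'meas hMmeas hQmeas hRnn hR'nn hMnn hQnn hcopy hindep hdist hq
    hM
end

section
/- Under the assumptions of the previous statement, define for m ≥ 1 and n ≥ m the truncated process x_n(m) = Σ_{k=n-m+1}^n b_k ∏_{j=k+1}^n a_j and the remainder x*_n(m) = x_n − x_n(m). Then sup_{n ≥ m} E[|x*_n(m)|^δ] ≤ L* ρ^m, where L* = |x_0|^δ + E[|b_1|^δ]/(1−ρ). -/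
open MeasureTheory ProbabilityTheory Finset
open scoped ENNReal

/-! Unrolling the recursion gives `x*_n(m) = x_{n-m} ∏_{j=n-m+1}^n a_j`. As `x_{n-m}` is a
function of `(a_j, b_j)_{j ≤ n-m}`, it is independent of the later `a_j`, so
`E|x*_n(m)|^δ = E|x_{n-m}|^δ ρ^m`. Subadditivity of `t ↦ t^δ` for `δ ≤ 1` gives
`E|x_{k+1}|^δ ≤ ρ E|x_k|^δ + E|b_1|^δ`, and `L*` is a bound preserved by this affine step. -/

namespace ProbabilityTheory

variable {Ω β : Type*} {mΩ : MeasurableSpace Ω} [mβ : MeasurableSpace β] {μ : Measure Ω}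
  {f : ℕ → Ω → β}

abbrev strictPast (f : ℕ → Ω → β) (n : ℕ) : MeasurableSpace Ω :=
  ⨆ j < n, mβ.comap (f j)

lemma strictPast_mono : Monotone (strictPast f) :=
  fun _ _ hmn => biSup_mono fun _ hj => lt_of_lt_of_le hj hmn

lemma comap_le_strictPast {j n : ℕ} (hjn : j < n) : mβ.comap (f j) ≤ strictPast f n :=
  le_iSup₂ (f := fun j (_ : j < n) => mβ.comap (f j)) j hjn

lemma strictPast_le (hf : ∀ i, Measurable (f i)) (n : ℕ) : strictPast f n ≤ mΩ :=
  iSup₂_le fun j _ => (hf j).comap_le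

lemma iIndepFun.indep_strictPast (hf : ∀ i, Measurable (f i)) (hind : iIndepFun f μ) (n : ℕ) :
    Indep (strictPast f n) (mβ.comap (f n)) μ := by
  have h := indep_iSup_of_disjoint (fun i => (hf i).comap_le)
    ((iIndepFun_iff_iIndep _ f μ).1 hind) (S := Set.Iio n) (T := {n}) (by simp)
  simpa [strictPast] using h

lemma iIndepFun.lintegral_mul_eq_of_strictPast (hf : ∀ i, Measurable (f i))
    (hind : iIndepFun f μ) {n : ℕ} {Y Z : Ω → ℝ≥0∞} (hY : Measurable[strictPast f n] Y)
    (hZ : Measurable[mβ.comap (f n)] Z) :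
    ∫⁻ ω, Y ω * Z ω ∂μ = (∫⁻ ω, Y ω ∂μ) * ∫⁻ ω, Z ω ∂μ :=
  lintegral_mul_eq_lintegral_mul_lintegral_of_independent_measurableSpace
    (strictPast_le hf n) (hf n).comap_le (hind.indep_strictPast hf n) hY hZ

lemma iIndepFun.lintegral_mul_prod_Ico (hf : ∀ i, Measurable (f i)) (hind : iIndepFun f μ)
    {k : ℕ} {Y : Ω → ℝ≥0∞} {Z : ℕ → Ω → ℝ≥0∞} {r : ℝ≥0∞}
    (hY : Measurable[strictPast f k] Y) (hZ : ∀ j, Measurable[mβ.comap (f j)] (Z j))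
    (hZr : ∀ j, ∫⁻ ω, Z j ω ∂μ = r) {n : ℕ} (hkn : k ≤ n) :
    ∫⁻ ω, Y ω * ∏ j ∈ Ico k n, Z j ω ∂μ = (∫⁻ ω, Y ω ∂μ) * r ^ (n - k) := by
  induction n, hkn using Nat.le_induction with
  | base => simp
  | succ n hkn ih =>
    have hpast : Measurable[strictPast f n] fun ω => Y ω * ∏ j ∈ Ico k n, Z j ω :=
      (hY.mono (strictPast_mono hkn) le_rfl).mul <| Finset.measurable_prod _ fun j hj =>
        (hZ j).mono (comap_le_strictPast (Finset.mem_Ico.1 hj).2) le_rfl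
    simp_rw [Finset.prod_Ico_succ_top hkn, ← mul_assoc]
    rw [hind.lintegral_mul_eq_of_strictPast hf hpast (hZ n), ih, hZr, mul_assoc, ← pow_succ,
      Nat.sub_add_comm hkn]

end ProbabilityTheory

lemma eq_mul_prod_add_sum_of_recurrence {R : Type*} [CommRing R] {a b x : ℕ → R}
    (hrec : ∀ n, x (n + 1) = a (n + 1) * x n + b (n + 1)) {k n : ℕ} (hkn : k ≤ n) :
    x n = x k * ∏ j ∈ Icc (k + 1) n, a j + ∑ i ∈ Icc (k + 1) n, b i * ∏ j ∈ Icc (i + 1) n, a j := by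
  induction n, hkn using Nat.le_induction with
  | base => simp
  | succ n hkn ih =>
    have hsum : ∑ i ∈ Icc (k + 1) n, b i * ∏ j ∈ Icc (i + 1) (n + 1), a j
        = (∑ i ∈ Icc (k + 1) n, b i * ∏ j ∈ Icc (i + 1) n, a j) * a (n + 1) := by
      rw [Finset.sum_mul]
      refine Finset.sum_congr rfl fun i hi => ?_
      rw [Finset.prod_Icc_succ_top (by have := (Finset.mem_Icc.1 hi).2; omega), mul_assoc]
    rw [hrec, ih, Finset.prod_Icc_succ_top (by omega), Finset.sum_Icc_succ_top (by omega), hsum,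
      Finset.Icc_eq_empty (show ¬n + 1 + 1 ≤ n + 1 by omega), Finset.prod_empty]
    ring

lemma ENNReal.le_of_le_mul_add {u : ℕ → ℝ≥0∞} {r c L : ℝ≥0∞} (h0 : u 0 ≤ L)
    (hstep : ∀ n, u (n + 1) ≤ u n * r + c) (hL : L * r + c ≤ L) (n : ℕ) : u n ≤ L := by
  induction n with
  | zero => exact h0
  | succ n ih => exact (hstep n).trans (le_trans (by gcongr) hL)

lemma enorm_mul_add_rpow_le {δ : ℝ} (hδ0 : 0 ≤ δ) (hδ1 : δ ≤ 1) (u v w : ℝ) :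
    ‖u * v + w‖ₑ ^ δ ≤ ‖u‖ₑ ^ δ * ‖v‖ₑ ^ δ + ‖w‖ₑ ^ δ :=
  calc ‖u * v + w‖ₑ ^ δ ≤ (‖u * v‖ₑ + ‖w‖ₑ) ^ δ := by gcongr; exact enorm_add_le _ _
    _ ≤ ‖u * v‖ₑ ^ δ + ‖w‖ₑ ^ δ := ENNReal.rpow_add_le_add_rpow _ _ hδ0 hδ1
    _ = ‖u‖ₑ ^ δ * ‖v‖ₑ ^ δ + ‖w‖ₑ ^ δ := by rw [enorm_mul, ENNReal.mul_rpow_of_nonneg _ _ hδ0]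

lemma ofReal_abs_rpow {δ : ℝ} (hδ : 0 ≤ δ) (t : ℝ) : ENNReal.ofReal (|t| ^ δ) = ‖t‖ₑ ^ δ := by
  rw [Real.enorm_eq_ofReal_abs, ENNReal.ofReal_rpow_of_nonneg (abs_nonneg t) hδ]

lemma lintegral_enorm_rpow_eq_ofReal_integral {Ω : Type*} [MeasurableSpace Ω] {μ : Measure Ω}
    {δ : ℝ} (hδ : 0 ≤ δ) {g : Ω → ℝ} (hg : Integrable (fun ω => |g ω| ^ δ) μ) :
    ∫⁻ ω, ‖g ω‖ₑ ^ δ ∂μ = ENNReal.ofReal (∫ ω, |g ω| ^ δ ∂μ) := by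
  rw [ofReal_integral_eq_lintegral_ofReal hg (ae_of_all _ fun ω => by positivity)]
  simp_rw [ofReal_abs_rpow hδ]

lemma add_div_one_sub_mul_add_le {c B ρ : ℝ} (hc : 0 ≤ c) (hρ1 : ρ < 1) :
    (c + B / (1 - ρ)) * ρ + B ≤ c + B / (1 - ρ) := by
  have h : (c + B / (1 - ρ)) * ρ + B = c * ρ + B / (1 - ρ) := by
    field_simp [(sub_pos.2 hρ1).ne']
    ring
  rw [h]
  nlinarith

section AffineRecurrence

variable {Ω : Type*} {a b x : ℕ → Ω → ℝ} {x0 δ : ℝ}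

lemma measurable_strictPast_of_recurrence (hx0 : ∀ ω, x 0 ω = x0)
    (hrec : ∀ n ω, x (n + 1) ω = a (n + 1) ω * x n ω + b (n + 1) ω) (n : ℕ) :
    Measurable[strictPast (fun i ω => (a (i + 1) ω, b (i + 1) ω)) n] (x n) := by
  induction n with
  | zero => simp only [funext hx0, measurable_const]
  | succ n ih =>
    have hnext : Measurable[strictPast (fun i ω => (a (i + 1) ω, b (i + 1) ω)) (n + 1)]
        fun ω => (a (n + 1) ω, b (n + 1) ω) :=
      (comap_measurable _).mono
        (comap_le_strictPast (f := fun i ω => (a (i + 1) ω, b (i + 1) ω)) n.lt_succ_self) le_rfl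
    rw [funext (hrec n)]
    exact (hnext.fst.mul (ih.mono (strictPast_mono n.le_succ) le_rfl)).add hnext.snd

lemma enorm_rpow_remainder_eq (hrec : ∀ n ω, x (n + 1) ω = a (n + 1) ω * x n ω + b (n + 1) ω)
    (hδ : 0 ≤ δ) {k n : ℕ} (hkn : k ≤ n) (ω : Ω) :
    ‖x n ω - ∑ i ∈ Icc (k + 1) n, b i ω * ∏ j ∈ Icc (i + 1) n, a j ω‖ₑ ^ δ
      = ‖x k ω‖ₑ ^ δ * ∏ j ∈ Ico k n, ‖a (j + 1) ω‖ₑ ^ δ := by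
  rw [eq_mul_prod_add_sum_of_recurrence (a := (a · ω)) (b := (b · ω)) (x := (x · ω))
    (hrec · ω) hkn, add_sub_cancel_right,
    enorm_mul, ENNReal.mul_rpow_of_nonneg _ _ hδ, ENNReal.prod_rpow_of_nonneg hδ,
    Finset.prod_Ico_add' (fun j => ‖a j ω‖ₑ), Finset.Ico_add_one_right_eq_Icc]
  simp [enorm_eq_nnnorm, nnnorm_prod]

lemma lintegral_enorm_rpow_remainder_eq [MeasurableSpace Ω] {μ : Measure Ω}
    (hameas : ∀ n, Measurable (a n)) (hbmeas : ∀ n, Measurable (b n))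
    (hiid : iIndepFun (fun n ω => (a (n + 1) ω, b (n + 1) ω)) μ) (hδ : 0 ≤ δ)
    (hx0 : ∀ ω, x 0 ω = x0) (hrec : ∀ n ω, x (n + 1) ω = a (n + 1) ω * x n ω + b (n + 1) ω)
    {r : ℝ≥0∞} (hA : ∀ j, ∫⁻ ω, ‖a (j + 1) ω‖ₑ ^ δ ∂μ = r) {m n : ℕ} (hmn : m ≤ n) :
    ∫⁻ ω, ‖x n ω - ∑ k ∈ Icc (n - m + 1) n, b k ω * ∏ j ∈ Icc (k + 1) n, a j ω‖ₑ ^ δ ∂μ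
      = (∫⁻ ω, ‖x (n - m) ω‖ₑ ^ δ ∂μ) * r ^ m := by
  simp_rw [enorm_rpow_remainder_eq hrec hδ (Nat.sub_le n m)]
  rw [hiid.lintegral_mul_prod_Ico (Y := fun ω => ‖x (n - m) ω‖ₑ ^ δ)
      (Z := fun j ω => ‖a (j + 1) ω‖ₑ ^ δ) (fun i => (hameas _).prodMk (hbmeas _))
      ((measurable_enorm.pow_const δ).comp (measurable_strictPast_of_recurrence hx0 hrec _))
      (fun j => (measurable_fst.enorm.pow_const δ).comp (comap_measurable _)) hA (Nat.sub_le n m),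
    Nat.sub_sub_self hmn]

lemma lintegral_enorm_rpow_succ_le [MeasurableSpace Ω] {μ : Measure Ω}
    (hameas : ∀ n, Measurable (a n)) (hbmeas : ∀ n, Measurable (b n))
    (hiid : iIndepFun (fun n ω => (a (n + 1) ω, b (n + 1) ω)) μ) (hδ0 : 0 ≤ δ) (hδ1 : δ ≤ 1)
    (hx0 : ∀ ω, x 0 ω = x0) (hrec : ∀ n ω, x (n + 1) ω = a (n + 1) ω * x n ω + b (n + 1) ω)
    (n : ℕ) :
    ∫⁻ ω, ‖x (n + 1) ω‖ₑ ^ δ ∂μ ≤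
      (∫⁻ ω, ‖x n ω‖ₑ ^ δ ∂μ) * (∫⁻ ω, ‖a (n + 1) ω‖ₑ ^ δ ∂μ) + ∫⁻ ω, ‖b (n + 1) ω‖ₑ ^ δ ∂μ := by
  have hf : ∀ i, Measurable fun ω => (a (i + 1) ω, b (i + 1) ω) :=
    fun i => (hameas _).prodMk (hbmeas _)
  have hX : Measurable[strictPast (fun i ω => (a (i + 1) ω, b (i + 1) ω)) n]
      fun ω => ‖x n ω‖ₑ ^ δ :=
    (measurable_enorm.pow_const δ).comp (measurable_strictPast_of_recurrence hx0 hrec n)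
  have hZ : Measurable[MeasurableSpace.comap (fun ω => (a (n + 1) ω, b (n + 1) ω)) inferInstance]
      fun ω => ‖a (n + 1) ω‖ₑ ^ δ :=
    (measurable_fst.enorm.pow_const δ).comp (comap_measurable _)
  calc ∫⁻ ω, ‖x (n + 1) ω‖ₑ ^ δ ∂μ
      ≤ ∫⁻ ω, ‖x n ω‖ₑ ^ δ * ‖a (n + 1) ω‖ₑ ^ δ + ‖b (n + 1) ω‖ₑ ^ δ ∂μ :=
        lintegral_mono fun ω => by
          rw [hrec, mul_comm (‖x n ω‖ₑ ^ δ)]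
          exact enorm_mul_add_rpow_le hδ0 hδ1 _ _ _
    _ = (∫⁻ ω, ‖x n ω‖ₑ ^ δ * ‖a (n + 1) ω‖ₑ ^ δ ∂μ) + ∫⁻ ω, ‖b (n + 1) ω‖ₑ ^ δ ∂μ :=
        lintegral_add_left ((hX.mono (strictPast_le hf n) le_rfl).mul
          ((hameas _).enorm.pow_const δ)) _
    _ = _ := by rw [hiid.lintegral_mul_eq_of_strictPast hf hX hZ]

lemma lintegral_enorm_rpow_le_of_recurrence [MeasurableSpace Ω] {μ : Measure Ω}
    [IsProbabilityMeasure μ]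
    (hameas : ∀ n, Measurable (a n)) (hbmeas : ∀ n, Measurable (b n))
    (hiid : iIndepFun (fun n ω => (a (n + 1) ω, b (n + 1) ω)) μ) (hδ0 : 0 ≤ δ) (hδ1 : δ ≤ 1)
    (hx0 : ∀ ω, x 0 ω = x0) (hrec : ∀ n ω, x (n + 1) ω = a (n + 1) ω * x n ω + b (n + 1) ω)
    {ρ B : ℝ} (hρ0 : 0 ≤ ρ) (hρ1 : ρ < 1) (hB : 0 ≤ B)
    (hAρ : ∀ j, ∫⁻ ω, ‖a (j + 1) ω‖ₑ ^ δ ∂μ = ENNReal.ofReal ρ)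
    (hBB : ∀ j, ∫⁻ ω, ‖b (j + 1) ω‖ₑ ^ δ ∂μ = ENNReal.ofReal B) (n : ℕ) :
    ∫⁻ ω, ‖x n ω‖ₑ ^ δ ∂μ ≤ ENNReal.ofReal (|x0| ^ δ + B / (1 - ρ)) := by
  have hL : 0 ≤ |x0| ^ δ + B / (1 - ρ) :=
    add_nonneg (by positivity) (div_nonneg hB (sub_pos.2 hρ1).le)
  refine ENNReal.le_of_le_mul_add (u := fun n => ∫⁻ ω, ‖x n ω‖ₑ ^ δ ∂μ) ?_
    (fun n => (lintegral_enorm_rpow_succ_le hameas hbmeas hiid hδ0 hδ1 hx0 hrec n).trans_eq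
      (by rw [hAρ, hBB])) ?_ n
  · simp only [hx0, lintegral_const, measure_univ, mul_one, ← ofReal_abs_rpow hδ0]
    exact ENNReal.ofReal_le_ofReal (le_add_of_nonneg_right (div_nonneg hB (sub_pos.2 hρ1).le))
  · rw [← ENNReal.ofReal_mul hL, ← ENNReal.ofReal_add (mul_nonneg hL hρ0) hB]
    exact ENNReal.ofReal_le_ofReal (add_div_one_sub_mul_add_le (by positivity) hρ1)

end AffineRecurrence

/-- For the random-coefficient autoregression `x_n = a_n x_{n-1} + b_n`, `x_0 = x₀`,
with `(a_n, b_n)_{n≥1}` i.i.d., `ρ = E[|a_1|^δ] < 1` and `E[|b_1|^δ] < ∞` for some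
`0 < δ ≤ 1`, the truncated process `x_n(m) = Σ_{k=n-m+1}^n b_k ∏_{j=k+1}^n a_j` and remainder
`x*_n(m) = x_n - x_n(m)` satisfy `sup_{n≥m} E[|x*_n(m)|^δ] ≤ L* ρ^m`, where
`L* = |x₀|^δ + E[|b_1|^δ]/(1-ρ)`. -/
theorem stmt_12 {Ω : Type*} [MeasurableSpace Ω] (μ : Measure Ω) [IsProbabilityMeasure μ]
    (a b : ℕ → Ω → ℝ) (hameas : ∀ n, Measurable (a n)) (hbmeas : ∀ n, Measurable (b n))
    (hiid : iIndepFun (fun n ω => (a (n + 1) ω, b (n + 1) ω)) μ)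
    (hid : ∀ n : ℕ, 1 ≤ n →
      Measure.map (fun ω => (a n ω, b n ω)) μ = Measure.map (fun ω => (a 1 ω, b 1 ω)) μ)
    {δ : ℝ} (hδ0 : 0 < δ) (hδ1 : δ ≤ 1)
    (haint : Integrable (fun ω => |a 1 ω| ^ δ) μ)
    (hρ : ∫ ω, |a 1 ω| ^ δ ∂μ < 1)
    (hbint : Integrable (fun ω => |b 1 ω| ^ δ) μ)
    (x0 : ℝ) (x : ℕ → Ω → ℝ) (hx0 : ∀ ω, x 0 ω = x0)
    (hxrec : ∀ n ω, x (n + 1) ω = a (n + 1) ω * x n ω + b (n + 1) ω) :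
    ∀ m : ℕ, 1 ≤ m → ∀ n : ℕ, m ≤ n →
      ∫⁻ ω, ENNReal.ofReal
          (|x n ω - ∑ k ∈ Icc (n - m + 1) n, b k ω * ∏ j ∈ Icc (k + 1) n, a j ω| ^ δ) ∂μ ≤
        ENNReal.ofReal ((|x0| ^ δ +
          (∫ ω, |b 1 ω| ^ δ ∂μ) / (1 - ∫ ω, |a 1 ω| ^ δ ∂μ)) *
            (∫ ω, |a 1 ω| ^ δ ∂μ) ^ m) := by
  intro m _ n hmn
  set ρ := ∫ ω, |a 1 ω| ^ δ ∂μ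
  set B := ∫ ω, |b 1 ω| ^ δ ∂μ
  have hρ0 : 0 ≤ ρ := integral_nonneg fun ω => by positivity
  have hB0 : 0 ≤ B := integral_nonneg fun ω => by positivity
  have hdist (j : ℕ) : IdentDistrib (fun ω => (a (j + 1) ω, b (j + 1) ω))
      (fun ω => (a 1 ω, b 1 ω)) μ μ :=
    ⟨((hameas _).prodMk (hbmeas _)).aemeasurable, ((hameas _).prodMk (hbmeas _)).aemeasurable,
      hid (j + 1) (Nat.le_add_left 1 j)⟩
  have hA (j : ℕ) : ∫⁻ ω, ‖a (j + 1) ω‖ₑ ^ δ ∂μ = ENNReal.ofReal ρ :=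
    ((hdist j).comp (measurable_fst.enorm.pow_const δ)).lintegral_eq.trans
      (lintegral_enorm_rpow_eq_ofReal_integral hδ0.le haint)
  have hB (j : ℕ) : ∫⁻ ω, ‖b (j + 1) ω‖ₑ ^ δ ∂μ = ENNReal.ofReal B :=
    ((hdist j).comp (measurable_snd.enorm.pow_const δ)).lintegral_eq.trans
      (lintegral_enorm_rpow_eq_ofReal_integral hδ0.le hbint)
  simp_rw [ofReal_abs_rpow hδ0.le]
  rw [lintegral_enorm_rpow_remainder_eq hameas hbmeas hiid hδ0.le hx0 hxrec hA hmn,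
    ENNReal.ofReal_mul (add_nonneg (by positivity) (div_nonneg hB0 (sub_pos.2 hρ).le)),
    ENNReal.ofReal_pow hρ0]
  gcongr
  exact lintegral_enorm_rpow_le_of_recurrence hameas hbmeas hiid hδ0.le hδ1 hx0 hxrec hρ0 hρ hB0
    hA hB _
end

section
/- Let R and R̃ be nonnegative random variables, (Y_n) and (Ỹ_n) nondecreasing nonnegative sequences of random variables with Y_n ↑ R and Ỹ_n ↑ R̃ a.s., and for u > 0 let T_u = inf{n ≥ 1 : Y_n > u + Ỹ_n}. Assume lim_{u→∞} u^β P(R > u) = C ∈ (0, ∞) for some β > 0, and lim_{u→∞} u^β P(R̃ > u) = 0. Assume moreover that P(T_u < ∞) = P(R > u + Ỹ_{T_u}) for all u, where Ỹ_{T_u} is evaluated on {T_u < ∞} and the event {T_u = ∞, R > u + R̃} is null. Then lim_{u→∞} u^β P(T_u < ∞) = C. -/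
open MeasureTheory ProbabilityTheory Filter
open scoped ENNReal

/-- Sandwich argument: `Y_n ↑ R`, `Ỹ_n ↑ R̃`, `T_u = inf{n ≥ 1 : Y_n > u + Ỹ_n}`.
If `u^β P(R > u) → C ∈ (0,∞)`, `u^β P(R̃ > u) → 0`, and
`P(T_u < ∞) = P(T_u < ∞, R > u + Ỹ_{T_u})` for all `u > 0`, then
`u^β P(T_u < ∞) → C`. -/
theorem stmt_17 {Ω : Type*} [MeasurableSpace Ω] (μ : Measure Ω) [IsProbabilityMeasure μ]
    (Y Ytil : ℕ → Ω → ℝ) (R Rtil : Ω → ℝ)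
    (hYmeas : ∀ n, Measurable (Y n)) (hYtilmeas : ∀ n, Measurable (Ytil n))
    (hRmeas : Measurable R) (hRtilmeas : Measurable Rtil)
    (hYnn : ∀ n ω, 0 ≤ Y n ω) (hYtilnn : ∀ n ω, 0 ≤ Ytil n ω)
    (hRnn : ∀ ω, 0 ≤ R ω) (hRtilnn : ∀ ω, 0 ≤ Rtil ω)
    (hmono : ∀ᵐ ω ∂μ, Monotone (fun n => Y n ω) ∧ Monotone (fun n => Ytil n ω))
    (hlim : ∀ᵐ ω ∂μ, Tendsto (fun n => Y n ω) atTop (nhds (R ω)) ∧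
      Tendsto (fun n => Ytil n ω) atTop (nhds (Rtil ω)))
    (T : ℝ → Ω → ℕ∞)
    (hT : ∀ u ω, T u ω =
      sInf ((fun n : ℕ => (n : ℕ∞)) '' {n : ℕ | 1 ≤ n ∧ u + Ytil n ω < Y n ω}))
    {β C : ℝ} (hβ : 0 < β) (hC : 0 < C)
    (hR : Tendsto (fun u : ℝ => u ^ β * (μ {ω | u < R ω}).toReal) atTop (nhds C))
    (hRtil : Tendsto (fun u : ℝ => u ^ β * (μ {ω | u < Rtil ω}).toReal) atTop (nhds 0))
    (hkey : ∀ u : ℝ, 0 < u →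
      μ {ω | T u ω ≠ ⊤} =
        μ {ω | T u ω ≠ ⊤ ∧ u + Ytil (T u ω).toNat ω < R ω}) :
    Tendsto (fun u : ℝ => u ^ β * (μ {ω | T u ω ≠ ⊤}).toReal) atTop (nhds C) := by
  rw [Metric.tendsto_nhds]
  intro ε hε
  -- upper bound: for u > 0, μ{T ≠ ⊤} ≤ μ{u < R}
  have lemA : ∀ u : ℝ, 0 < u →
      (μ {ω | T u ω ≠ ⊤}).toReal ≤ (μ {ω | u < R ω}).toReal := by
    intro u hu
    have h1 : μ {ω | T u ω ≠ ⊤} ≤ μ {ω | u < R ω} := by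
      rw [hkey u hu]
      apply measure_mono
      intro ω hω
      have := hYtilnn (T u ω).toNat ω
      simp only [Set.mem_setOf_eq] at hω ⊢
      linarith [hω.2]
    exact ENNReal.toReal_mono (measure_ne_top μ _) h1
  -- lower bound: for δ, u > 0
  have lemB : ∀ δ : ℝ, 0 < δ → ∀ u : ℝ, 0 < u →
      (μ {ω | (1 + δ) * u < R ω}).toReal ≤
        (μ {ω | T u ω ≠ ⊤}).toReal + (μ {ω | δ * u < Rtil ω}).toReal := by
    intro δ hδ u hu
    have hsub : ({ω | (1 + δ) * u < R ω} : Set Ω) ≤ᵐ[μ]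
        (({ω | T u ω ≠ ⊤} ∪ {ω | δ * u < Rtil ω} : Set Ω)) := by
      filter_upwards [hmono, hlim] with ω hm hl hω
      by_cases hcase : δ * u < Rtil ω
      · exact Or.inr hcase
      · left
        push_neg at hcase
        have hYt : ∀ n, Ytil n ω ≤ Rtil ω := fun n => hm.2.ge_of_tendsto hl.2 n
        have hev : ∀ᶠ n in atTop, (1 + δ) * u < Y n ω :=
          hl.1.eventually (eventually_gt_nhds hω)
        obtain ⟨N, hN1, hN2⟩ := (eventually_ge_atTop 1).and hev |>.exists
        have hmem : (N : ℕ∞) ∈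
            (fun n : ℕ => (n : ℕ∞)) '' {n : ℕ | 1 ≤ n ∧ u + Ytil n ω < Y n ω} := by
          refine ⟨N, ⟨hN1, ?_⟩, rfl⟩
          have : Ytil N ω ≤ δ * u := le_trans (hYt N) hcase
          nlinarith
        show T u ω ≠ ⊤
        rw [hT u ω]
        exact ne_top_of_le_ne_top (WithTop.coe_ne_top) (sInf_le hmem)
    have h1 : μ {ω | (1 + δ) * u < R ω} ≤
        μ {ω | T u ω ≠ ⊤} + μ {ω | δ * u < Rtil ω} :=
      le_trans (measure_mono_ae hsub) (measure_union_le _ _)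
    calc (μ {ω | (1 + δ) * u < R ω}).toReal
        ≤ (μ {ω | T u ω ≠ ⊤} + μ {ω | δ * u < Rtil ω}).toReal :=
          ENNReal.toReal_mono (by finiteness) h1
      _ = (μ {ω | T u ω ≠ ⊤}).toReal + (μ {ω | δ * u < Rtil ω}).toReal :=
          ENNReal.toReal_add (measure_ne_top μ _) (measure_ne_top μ _)
  -- limits with scaled argument
  have L2 : ∀ δ : ℝ, 0 < δ →
      Tendsto (fun u : ℝ => u ^ β * (μ {ω | (1 + δ) * u < R ω}).toReal) atTop
        (nhds ((1 + δ) ^ (-β) * C)) := by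
    intro δ hδ
    have hpos : (0:ℝ) < 1 + δ := by linarith
    have h1 : Tendsto (fun u : ℝ => (1 + δ) * u) atTop atTop :=
      tendsto_id.const_mul_atTop hpos
    have h2 := (hR.comp h1).const_mul ((1 + δ) ^ (-β))
    refine h2.congr' ?_
    filter_upwards [eventually_gt_atTop 0] with u hu
    simp only [Function.comp]
    rw [Real.mul_rpow hpos.le hu.le]
    rw [← mul_assoc, ← mul_assoc, ← Real.rpow_add hpos]
    simp
  have L3 : ∀ δ : ℝ, 0 < δ →
      Tendsto (fun u : ℝ => u ^ β * (μ {ω | δ * u < Rtil ω}).toReal) atTop (nhds 0) := by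
    intro δ hδ
    have h1 : Tendsto (fun u : ℝ => δ * u) atTop atTop :=
      tendsto_id.const_mul_atTop hδ
    have h2 := (hRtil.comp h1).const_mul (δ ^ (-β))
    rw [mul_zero] at h2
    refine h2.congr' ?_
    filter_upwards [eventually_gt_atTop 0] with u hu
    simp only [Function.comp]
    rw [Real.mul_rpow hδ.le hu.le]
    rw [← mul_assoc, ← mul_assoc, ← Real.rpow_add hδ]
    simp
  -- choose δ > 0 with |(1+δ)^(-β) * C - C| < ε/3
  have hcont : Tendsto (fun δ : ℝ => (1 + δ) ^ (-β) * C) (nhds 0) (nhds C) := by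
    have h1 : ContinuousAt (fun x : ℝ => x ^ (-β)) (1 + (0:ℝ)) :=
      Real.continuousAt_rpow_const _ (-β) (Or.inl (by norm_num))
    have h2 : ContinuousAt (fun δ : ℝ => (1 + δ : ℝ)) 0 := by fun_prop
    have h3 : ContinuousAt (fun δ : ℝ => ((1 + δ : ℝ)) ^ (-β)) 0 := h1.comp h2
    have h4 : ContinuousAt (fun δ : ℝ => (1 + δ) ^ (-β) * C) 0 :=
      h3.mul continuousAt_const
    have h5 := h4.tendsto
    simpa [Real.one_rpow] using h5
  obtain ⟨δ, hδmem, hδclose⟩ :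
      ∃ δ : ℝ, δ ∈ Set.Ioi (0:ℝ) ∧ |(1 + δ) ^ (-β) * C - C| < ε / 3 := by
    have hev : ∀ᶠ δ in nhds (0:ℝ), |(1 + δ) ^ (-β) * C - C| < ε / 3 := by
      have := Metric.tendsto_nhds.mp hcont (ε/3) (by linarith)
      simpa [Real.dist_eq] using this
    have hev' : ∀ᶠ δ in nhdsWithin (0:ℝ) (Set.Ioi 0),
        |(1 + δ) ^ (-β) * C - C| < ε / 3 := hev.filter_mono nhdsWithin_le_nhds
    exact (hev'.and self_mem_nhdsWithin).exists.imp (fun δ h => ⟨h.2, h.1⟩)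
  have hδ : 0 < δ := hδmem
  -- combine
  have hRc := Metric.tendsto_nhds.mp hR ε hε
  have hL2 := Metric.tendsto_nhds.mp (L2 δ hδ) (ε/3) (by linarith)
  have hL3 := Metric.tendsto_nhds.mp (L3 δ hδ) (ε/3) (by linarith)
  filter_upwards [hRc, hL2, hL3, eventually_gt_atTop 0] with u h1 h2 h3 hu
  rw [Real.dist_eq] at h1 h2 ⊢
  rw [Real.dist_eq, sub_zero] at h3
  have hub : u ^ β * (μ {ω | T u ω ≠ ⊤}).toReal ≤ u ^ β * (μ {ω | u < R ω}).toReal :=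
    mul_le_mul_of_nonneg_left (lemA u hu) (Real.rpow_nonneg hu.le β)
  have hlb : u ^ β * (μ {ω | (1 + δ) * u < R ω}).toReal ≤
      u ^ β * (μ {ω | T u ω ≠ ⊤}).toReal + u ^ β * (μ {ω | δ * u < Rtil ω}).toReal := by
    rw [← mul_add]
    exact mul_le_mul_of_nonneg_left (lemB δ hδ u hu) (Real.rpow_nonneg hu.le β)
  have e1 := abs_sub_lt_iff.mp h1
  have e2 := abs_sub_lt_iff.mp h2
  have e3 := abs_lt.mp h3
  have ed := abs_sub_lt_iff.mp hδclose
  rw [abs_sub_lt_iff]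
  constructor
  · linarith [e1.1]
  · linarith [e2.2, e3.1, ed.1]
end
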